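/- arXiv:1201.0240 — 6 statements merged into one kernel-verified Lean document; each statement's English description precedes it below -/
import Mathlib

section
/- Let k ≥ 1 and let a_1,…,a_k and b_1,…,b_k be real numbers satisfying the interlacing chain b_1 ≥ a_1 ≥ b_2 ≥ a_2 ≥ … ≥ a_{k−1} ≥ b_k ≥ |a_k|. Then there exists a vector Y = (y_1,…,y_{2k}) ∈ ℝ^{2k} such that the skew-symmetric matrix A(a,Y) is SO(2k+1)-conjugate to the block-diagonal matrix S = diag(L(b_1),…,L(b_k),0). -/
open Matrix Polynomial

/-- The `m × m` real matrix built from the `2 × 2` blocks `L (c 0), …, L (c (n-1))`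
(where `L a` has first row `(0, -a)` and second row `(a, 0)`) placed along the
diagonal, all remaining entries being `0`.  For `m = 2n` this is
`diag (L c₁, …, L cₙ)`; for `m = 2n+1` this is `diag (L c₁, …, L cₙ, 0)`. -/
def diagL (m n : ℕ) (c : Fin n → ℝ) : Matrix (Fin m) (Fin m) ℝ :=
  Matrix.of fun i j =>
    if h : i.val / 2 = j.val / 2 ∧ i.val / 2 < n then
      if i.val % 2 = 0 ∧ j.val % 2 = 1 then -c ⟨i.val / 2, h.2⟩
      else if i.val % 2 = 1 ∧ j.val % 2 = 0 then c ⟨i.val / 2, h.2⟩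
      else 0
    else 0

/-- `X` and `Y` are conjugate by a special orthogonal matrix:
there is `B` with `BᵀB = 1`, `det B = 1` and `B X B⁻¹ = Y`. -/
def SOConj {m : ℕ} (X Y : Matrix (Fin m) (Fin m) ℝ) : Prop :=
  ∃ B : Matrix (Fin m) (Fin m) ℝ, Bᵀ * B = 1 ∧ B.det = 1 ∧ B * X * B⁻¹ = Y

/-- The `(2k+1) × (2k+1)` real skew-symmetric matrix `A(a, Y)` with top-left
`2k × 2k` block `diag (L a₁, …, L aₖ)`, last column `(y₁, …, y_{2k}, 0)ᵀ` and
last row `(-y₁, …, -y_{2k}, 0)`. -/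
def Aodd (k : ℕ) (a : Fin k → ℝ) (Y : Fin (2*k) → ℝ) :
    Matrix (Fin (2*k+1)) (Fin (2*k+1)) ℝ :=
  Matrix.of fun i j =>
    if hi : i.val < 2*k then
      if hj : j.val < 2*k then diagL (2*k) k a ⟨i.val, hi⟩ ⟨j.val, hj⟩
      else Y ⟨i.val, hi⟩
    else if hj : j.val < 2*k then -Y ⟨j.val, hj⟩ else 0

/-!
Write `α = a²` and `β = b²`. When the interlacing is strict, the partial fraction expansion of
`∏ (x - α_l) - ∏ (x - β_l)` over `∏ (x - α_l)` gives weights `r_j > 0` with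
`∑_j r_j / (β_m - α_j) = 1` for every `m`. Putting `√r_j` in the even slots of `Y`, one writes down
for each `m` vectors `u_m, v_m` with `A u_m = b_m v_m` and `A v_m = -b_m u_m`. Skew-symmetry of `A`
makes these planes pairwise orthogonal, and together with a unit vector of the kernel of `A` (which
is nontrivial in odd dimension) they form an orthonormal frame conjugating `A` to `S`.
The general case follows by perturbing `(a, b)` into strict interlacing: the set of pairs `(a, b)`
for which a suitable `Y` exists is closed, because `SO(2k+1)` is compact.
-/

section Skew
variable {ι R : Type*} [Fintype ι] [CommRing R] {A : Matrix ι ι R}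

lemma dotProduct_mulVec_of_transpose_eq_neg (hA : Aᵀ = -A) (x y : ι → R) :
    x ⬝ᵥ (A *ᵥ y) = -((A *ᵥ x) ⬝ᵥ y) := by
  rw [dotProduct_mulVec, ← mulVec_transpose, hA, neg_mulVec, neg_dotProduct, dotProduct_comm]

variable [IsDomain R]

lemma dotProduct_eq_zero_of_mulVec_mulVec_eq_smul (hA : Aᵀ = -A) {x y : ι → R} {μ ν : R}
    (hx : A *ᵥ (A *ᵥ x) = μ • x) (hy : A *ᵥ (A *ᵥ y) = ν • y) (hμν : μ ≠ ν) :
    x ⬝ᵥ y = 0 := by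
  have h := dotProduct_mulVec_of_transpose_eq_neg hA x (A *ᵥ y)
  rw [dotProduct_mulVec_of_transpose_eq_neg hA (A *ᵥ x) y, neg_neg, hx, hy, dotProduct_smul,
    smul_dotProduct, smul_eq_mul, smul_eq_mul] at h
  exact (mul_eq_zero.mp (by linear_combination -h : (μ - ν) * (x ⬝ᵥ y) = 0)).resolve_left
    (sub_ne_zero.mpr hμν)

variable [CharZero R]

lemma dotProduct_mulVec_self_of_transpose_eq_neg (hA : Aᵀ = -A) (x : ι → R) :
    x ⬝ᵥ (A *ᵥ x) = 0 := by
  have h := dotProduct_mulVec_of_transpose_eq_neg hA x x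
  rw [dotProduct_comm (A *ᵥ x)] at h
  exact (mul_eq_zero.mp (by linear_combination h : (2 : R) * (x ⬝ᵥ (A *ᵥ x)) = 0)).resolve_left
    two_ne_zero

lemma dotProduct_eq_zero_and_eq_of_rotation (hA : Aᵀ = -A) {u v : ι → R} {b : R}
    (hu : A *ᵥ u = b • v) (hv : A *ᵥ v = -(b • u)) (hb : b ≠ 0) :
    u ⬝ᵥ v = 0 ∧ v ⬝ᵥ v = u ⬝ᵥ u := by
  have huv := dotProduct_mulVec_self_of_transpose_eq_neg hA u
  have hvu := dotProduct_mulVec_of_transpose_eq_neg hA v u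
  rw [hu, dotProduct_smul, smul_eq_mul] at huv
  rw [hu, hv, dotProduct_smul, neg_dotProduct, smul_dotProduct, smul_eq_mul, smul_eq_mul,
    neg_neg] at hvu
  exact ⟨(mul_eq_zero.mp huv).resolve_left hb, mul_left_cancel₀ hb hvu⟩

lemma exists_mulVec_eq_zero_of_transpose_eq_neg [DecidableEq ι] (hA : Aᵀ = -A)
    (hι : Odd (Fintype.card ι)) : ∃ w ≠ 0, A *ᵥ w = 0 := by
  refine exists_mulVec_eq_zero_iff.mpr ?_
  have h := congrArg det hA
  rw [det_transpose, det_neg, hι.neg_one_pow, neg_one_mul] at h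
  exact (mul_eq_zero.mp (by linear_combination h : (2 : R) * A.det = 0)).resolve_left two_ne_zero

end Skew

lemma soConj_of_mul_transpose {m : ℕ} {B X Y : Matrix (Fin m) (Fin m) ℝ} (hB : B * Bᵀ = 1)
    (hdet : B.det = 1) (h : B * X * Bᵀ = Y) : SOConj X Y :=
  ⟨B, mul_eq_one_comm.mp hB, hdet, by rwa [inv_eq_right_inv hB]⟩

lemma inv_sqrt_smul_dotProduct_self {ι : Type*} [Fintype ι] {x : ι → ℝ} (hx : x ≠ 0) :
    ((√(x ⬝ᵥ x))⁻¹ • x) ⬝ᵥ ((√(x ⬝ᵥ x))⁻¹ • x) = 1 := by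
  have hpos : 0 < x ⬝ᵥ x :=
    lt_of_le_of_ne (Finset.sum_nonneg fun i _ => mul_self_nonneg (x i))
      (Ne.symm (dotProduct_self_eq_zero.not.mpr hx))
  rw [smul_dotProduct, dotProduct_smul, smul_smul, smul_eq_mul, ← mul_inv, ← sq,
    Real.sq_sqrt hpos.le, inv_mul_cancel₀ hpos.ne']

lemma soConj_iff {m : ℕ} {X Y : Matrix (Fin m) (Fin m) ℝ} :
    SOConj X Y ↔ ∃ B : Matrix (Fin m) (Fin m) ℝ, Bᵀ * B = 1 ∧ B.det = 1 ∧ X = Bᵀ * Y * B := by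
  refine ⟨fun ⟨B, hB, hdet, h⟩ => ⟨B, hB, hdet, ?_⟩, fun ⟨B, hB, hdet, h⟩ => ⟨B, hB, hdet, ?_⟩⟩
  · rw [← h, inv_eq_left_inv hB, ← Matrix.mul_assoc, ← Matrix.mul_assoc, hB, Matrix.one_mul,
      Matrix.mul_assoc, hB, Matrix.mul_one]
  · rw [h, inv_eq_left_inv hB, ← Matrix.mul_assoc, ← Matrix.mul_assoc, mul_eq_one_comm.mp hB,
      Matrix.one_mul, Matrix.mul_assoc, mul_eq_one_comm.mp hB, Matrix.mul_one]

section Cauchy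
open Lagrange Finset
variable {ι K : Type*} [Fintype ι] [DecidableEq ι] [Field K]

def cauchyWeight (α β : ι → K) (j : ι) : K :=
  (β j - α j) * ∏ l ∈ univ.erase j, (β l - α j) / (α l - α j)

lemma nodal_sub_nodal_eq_sum {α : ι → K} (hα : Function.Injective α) (β : ι → K) :
    nodal univ α - nodal univ β = ∑ j, C (cauchyWeight α β j) * nodal (univ.erase j) α := by
  refine eq_of_degrees_lt_of_eval_index_eq univ hα.injOn ?_ ?_ ?_
  · rw [← degree_nodal (v := α)]
    exact degree_sub_lt_left (by simp) nodal_ne_zero (by simp [nodal_monic.leadingCoeff])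
  · rw [← mem_degreeLT]
    refine Submodule.sum_mem _ fun j _ => ?_
    rw [← smul_eq_C_mul]
    refine Submodule.smul_mem _ _ (mem_degreeLT.mpr ?_)
    rw [degree_nodal, card_erase_of_mem (mem_univ j)]
    exact_mod_cast Nat.sub_one_lt (card_ne_zero_of_mem (mem_univ j))
  · intro i _
    rw [eval_sub, eval_nodal_at_node (mem_univ i), eval_finsetSum,
      sum_eq_single i (fun j _ hji => by rw [eval_mul, eval_nodal_at_node (by simpa using hji.symm),
        mul_zero]) (by simp), eval_mul, eval_C, eval_nodal, eval_nodal, cauchyWeight, mul_assoc,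
      ← prod_mul_distrib, ← mul_prod_erase univ _ (mem_univ i)]
    have hfac : ∀ l ∈ univ.erase i, (β l - α i) / (α l - α i) * (α i - α l) = α i - β l :=
      fun l hl => by
        have : α l - α i ≠ 0 := sub_ne_zero.mpr (hα.ne (mem_erase.mp hl).1)
        field_simp
        ring
    rw [prod_congr rfl hfac]
    ring

lemma sum_cauchyWeight_div_sub {α : ι → K} (hα : Function.Injective α) (β : ι → K) (m : ι)
    (hm : ∀ j, β m ≠ α j) : ∑ j, cauchyWeight α β j / (β m - α j) = 1 := by
  have key := congrArg (eval (β m)) (nodal_sub_nodal_eq_sum hα β)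
  rw [eval_sub, eval_nodal_at_node (mem_univ m), sub_zero, eval_finsetSum] at key
  have hP : eval (β m) (nodal univ α) ≠ 0 := eval_nodal_not_at_node fun j _ => hm j
  have hterm j : cauchyWeight α β j / (β m - α j) =
      eval (β m) (C (cauchyWeight α β j) * nodal (univ.erase j) α) / eval (β m) (nodal univ α) := by
    rw [nodal_eq_mul_nodal_erase (mem_univ j), eval_mul, eval_mul, eval_sub, eval_X, eval_C, eval_C,
      mul_div_mul_right _ _ (eval_nodal_not_at_node fun l _ => hm l)]
  rw [sum_congr rfl fun j _ => hterm j, ← sum_div, ← key, div_self hP]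

lemma cauchyWeight_pos {K : Type*} [Field K] [LinearOrder K] [IsStrictOrderedRing K]
    [LinearOrder ι] {α β : ι → K} (h₁ : ∀ j, α j < β j) (h₂ : ∀ i j, i < j → β j < α i) (j : ι) :
    0 < cauchyWeight α β j := by
  refine mul_pos (sub_pos.mpr (h₁ j)) (prod_pos fun l hl => ?_)
  rcases lt_or_gt_of_ne (mem_erase.mp hl).1 with h | h
  · have hαα : α j < α l := (h₁ j).trans (h₂ l j h)
    exact div_pos (sub_pos.mpr (hαα.trans (h₁ l))) (sub_pos.mpr hαα)
  · exact div_pos_of_neg_of_neg (sub_neg.mpr (h₂ j l h)) (sub_neg.mpr ((h₁ l).trans (h₂ j l h)))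

end Cauchy

namespace OddSkew

variable {k : ℕ}

def evenIdx (m : Fin k) : Fin (2 * k + 1) := ⟨2 * m, by omega⟩

def oddIdx (m : Fin k) : Fin (2 * k + 1) := ⟨2 * m + 1, by omega⟩

@[simp] lemma evenIdx_inj {m l : Fin k} : evenIdx m = evenIdx l ↔ m = l := by
  simp [evenIdx, Fin.ext_iff]

@[simp] lemma oddIdx_inj {m l : Fin k} : oddIdx m = oddIdx l ↔ m = l := by
  simp [oddIdx, Fin.ext_iff]

@[simp] lemma evenIdx_ne_oddIdx (m l : Fin k) : evenIdx m ≠ oddIdx l := by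
  simp only [evenIdx, oddIdx, ne_eq, Fin.ext_iff]; omega

@[simp] lemma oddIdx_ne_evenIdx (m l : Fin k) : oddIdx m ≠ evenIdx l :=
  (evenIdx_ne_oddIdx l m).symm

@[simp] lemma evenIdx_ne_last (m : Fin k) : evenIdx m ≠ Fin.last (2 * k) := by
  simp only [evenIdx, ne_eq, Fin.ext_iff, Fin.val_last]; omega

@[simp] lemma oddIdx_ne_last (m : Fin k) : oddIdx m ≠ Fin.last (2 * k) := by
  simp only [oddIdx, ne_eq, Fin.ext_iff, Fin.val_last]; omega

@[simp] lemma last_ne_evenIdx (m : Fin k) : Fin.last (2 * k) ≠ evenIdx m :=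
  (evenIdx_ne_last m).symm

@[simp] lemma last_ne_oddIdx (m : Fin k) : Fin.last (2 * k) ≠ oddIdx m :=
  (oddIdx_ne_last m).symm

@[elab_as_elim]
lemma blockCases {motive : Fin (2 * k + 1) → Prop} (even : ∀ m, motive (evenIdx m))
    (odd : ∀ m, motive (oddIdx m)) (last : motive (Fin.last (2 * k))) (i : Fin (2 * k + 1)) :
    motive i := by
  obtain ⟨i, hi⟩ := i
  rcases Nat.lt_or_ge i (2 * k) with h | h
  · rcases Nat.even_or_odd' i with ⟨m, rfl | rfl⟩
    · exact even ⟨m, by omega⟩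
    · exact odd ⟨m, by omega⟩
  · obtain rfl : i = 2 * k := by omega
    exact last

lemma sum_fin_two_mul {M : Type*} [AddCommMonoid M] (f : Fin (2 * k) → M) :
    ∑ q, f q = ∑ m : Fin k, (f ⟨2 * m, by omega⟩ + f ⟨2 * m + 1, by omega⟩) := by
  rw [← (finProdFinEquiv.trans (finCongr (mul_comm k 2))).sum_comp, Fintype.sum_prod_type]
  refine Finset.sum_congr rfl fun m _ => ?_
  rw [Fin.sum_univ_two]
  congr 2 <;> ext <;> simp [finProdFinEquiv, add_comm]

lemma sum_univ_eq_sum_evenIdx_oddIdx_add_last {M : Type*} [AddCommMonoid M] (f : Fin (2 * k + 1) → M) :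
    ∑ i, f i = ∑ m, (f (evenIdx m) + f (oddIdx m)) + f (Fin.last (2 * k)) := by
  rw [Fin.sum_univ_castSucc, sum_fin_two_mul]
  rfl

def interleave {α : Type*} (p q : Fin k → α) (t : α) : Fin (2 * k + 1) → α := fun i =>
  if h : i.val < 2 * k then
    if i.val % 2 = 0 then p ⟨i.val / 2, by omega⟩ else q ⟨i.val / 2, by omega⟩
  else t

section interleave
variable {α : Type*} (p q : Fin k → α) (t : α)

@[simp] lemma interleave_evenIdx (m : Fin k) : interleave p q t (evenIdx m) = p m := by
  simp [interleave, evenIdx]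

@[simp] lemma interleave_oddIdx (m : Fin k) : interleave p q t (oddIdx m) = q m := by
  simp [interleave, oddIdx, show 2 * (m : ℕ) + 1 < 2 * k by omega,
    show (2 * (m : ℕ) + 1) / 2 = m by omega]

@[simp] lemma interleave_last : interleave p q t (Fin.last (2 * k)) = t := by
  simp [interleave]

end interleave

section entries
variable (c : Fin k → ℝ) (i : Fin (2 * k + 1))

lemma diagL_apply_evenIdx (m : Fin k) :
    diagL (2 * k + 1) k c i (evenIdx m) = if i = oddIdx m then c m else 0 := by
  obtain ⟨i, hi⟩ := i
  simp only [diagL, evenIdx, oddIdx, of_apply, Fin.ext_iff]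
  split_ifs <;> first | rfl | omega | (congr 1; ext; simp; omega)

lemma diagL_apply_oddIdx (m : Fin k) :
    diagL (2 * k + 1) k c i (oddIdx m) = if i = evenIdx m then -c m else 0 := by
  obtain ⟨i, hi⟩ := i
  simp only [diagL, evenIdx, oddIdx, of_apply, Fin.ext_iff]
  split_ifs <;> first | rfl | omega | (congr 2; ext; simp; omega)

lemma diagL_apply_last : diagL (2 * k + 1) k c i (Fin.last (2 * k)) = 0 := by
  simp only [diagL, of_apply, Fin.val_last]
  split_ifs <;> first | rfl | omega

end entries

lemma diagL_apply_swap (m n : ℕ) (c : Fin n → ℝ) (i j : Fin m) :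
    diagL m n c j i = -diagL m n c i j := by
  simp only [diagL, of_apply]
  by_cases h : j.val / 2 = i.val / 2 ∧ j.val / 2 < n
  · obtain ⟨hji, hlt⟩ := h
    rw [dif_pos ⟨hji, hlt⟩, dif_pos ⟨hji.symm, by omega⟩]
    simp only [hji]
    split_ifs <;> first | ring1 | omega
  · rw [dif_neg h, dif_neg fun h' : i.val / 2 = j.val / 2 ∧ i.val / 2 < n =>
      h ⟨h'.1.symm, h'.1 ▸ h'.2⟩, neg_zero]

section Aodd
variable (a : Fin k → ℝ) (Y : Fin (2 * k) → ℝ)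

lemma Aodd_apply_of_ne_last {i j : Fin (2 * k + 1)} (hi : i ≠ Fin.last _) (hj : j ≠ Fin.last _) :
    Aodd k a Y i j = diagL (2 * k + 1) k a i j := by
  rw [Ne, Fin.ext_iff, Fin.val_last] at hi hj
  simp only [Aodd, diagL, of_apply, dif_pos (show i.val < 2 * k by omega),
    dif_pos (show j.val < 2 * k by omega)]

lemma Aodd_apply_last_right {i : Fin (2 * k + 1)} (hi : i ≠ Fin.last _) :
    Aodd k a Y i (Fin.last _) = Y (i.castPred hi) := by
  rw [Ne, Fin.ext_iff, Fin.val_last] at hi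
  simp only [Aodd, of_apply, dif_pos (show i.val < 2 * k by omega), Fin.val_last,
    lt_self_iff_false, dite_false]
  rfl

lemma Aodd_apply_last_left {j : Fin (2 * k + 1)} (hj : j ≠ Fin.last _) :
    Aodd k a Y (Fin.last _) j = -Y (j.castPred hj) := by
  rw [Ne, Fin.ext_iff, Fin.val_last] at hj
  simp only [Aodd, of_apply, dif_pos (show j.val < 2 * k by omega), Fin.val_last,
    lt_self_iff_false, dite_false]
  rfl

lemma Aodd_apply_last_last : Aodd k a Y (Fin.last _) (Fin.last _) = 0 := by
  simp [Aodd]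

lemma Aodd_transpose : (Aodd k a Y)ᵀ = -Aodd k a Y := by
  ext i j
  rw [transpose_apply, neg_apply]
  by_cases hi : i = Fin.last _ <;> by_cases hj : j = Fin.last _
  · subst hi hj; simp [Aodd_apply_last_last]
  · subst hi; rw [Aodd_apply_last_right _ _ hj, Aodd_apply_last_left _ _ hj, neg_neg]
  · subst hj; rw [Aodd_apply_last_right _ _ hi, Aodd_apply_last_left _ _ hi]
  · rw [Aodd_apply_of_ne_last _ _ hi hj, Aodd_apply_of_ne_last _ _ hj hi, diagL_apply_swap]

end Aodd

section mulVec
variable (a : Fin k → ℝ) (y x : Fin (2 * k + 1) → ℝ)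

lemma mulVec_Aodd_evenIdx (l : Fin k) :
    (Aodd k a (fun q => y q.castSucc) *ᵥ x) (evenIdx l) =
      -a l * x (oddIdx l) + y (evenIdx l) * x (Fin.last _) := by
  simp [mulVec, dotProduct, sum_univ_eq_sum_evenIdx_oddIdx_add_last, Aodd_apply_of_ne_last, Aodd_apply_last_right,
    diagL_apply_evenIdx, diagL_apply_oddIdx]

lemma mulVec_Aodd_oddIdx (l : Fin k) :
    (Aodd k a (fun q => y q.castSucc) *ᵥ x) (oddIdx l) =
      a l * x (evenIdx l) + y (oddIdx l) * x (Fin.last _) := by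
  simp [mulVec, dotProduct, sum_univ_eq_sum_evenIdx_oddIdx_add_last, Aodd_apply_of_ne_last, Aodd_apply_last_right,
    diagL_apply_evenIdx, diagL_apply_oddIdx]

lemma mulVec_Aodd_last :
    (Aodd k a (fun q => y q.castSucc) *ᵥ x) (Fin.last _) =
      -∑ m, (y (evenIdx m) * x (evenIdx m) + y (oddIdx m) * x (oddIdx m)) := by
  simp only [mulVec, dotProduct, sum_univ_eq_sum_evenIdx_oddIdx_add_last, ne_eq, evenIdx_ne_last, oddIdx_ne_last,
    not_false_eq_true, Aodd_apply_last_left, Aodd_apply_last_last, Fin.castSucc_castPred, neg_mul,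
    zero_mul, add_zero, ← Finset.sum_neg_distrib, neg_add]

end mulVec

section frame
variable {A : Matrix (Fin (2 * k + 1)) (Fin (2 * k + 1)) ℝ} {b : Fin k → ℝ}
  {u v : Fin k → Fin (2 * k + 1) → ℝ} {w : Fin (2 * k + 1) → ℝ}

lemma interleave_orthonormal (hA : Aᵀ = -A) (hb : ∀ m, b m ≠ 0)
    (hb_sq : Pairwise fun m l => b m ^ 2 ≠ b l ^ 2)
    (hu : ∀ m, A *ᵥ u m = b m • v m) (hv : ∀ m, A *ᵥ v m = -(b m • u m)) (hw : A *ᵥ w = 0)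
    (hu_one : ∀ m, u m ⬝ᵥ u m = 1) (hw_one : w ⬝ᵥ w = 1) (i j : Fin (2 * k + 1)) :
    interleave u v w i ⬝ᵥ interleave u v w j = (1 : Matrix (Fin (2 * k + 1)) _ ℝ) i j := by
  have hu_sq m : A *ᵥ (A *ᵥ u m) = (-b m ^ 2) • u m := by
    rw [hu, mulVec_smul, hv, smul_neg, smul_smul, neg_smul, sq]
  have hv_sq m : A *ᵥ (A *ᵥ v m) = (-b m ^ 2) • v m := by
    rw [hv, mulVec_neg, mulVec_smul, hu, smul_smul, neg_smul, sq]
  have hw_sq : A *ᵥ (A *ᵥ w) = (0 : ℝ) • w := by rw [hw, mulVec_zero, zero_smul]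
  have hne {m l} (h : m ≠ l) : -b m ^ 2 ≠ -b l ^ 2 := by simpa using hb_sq h
  have hne_zero m : -b m ^ 2 ≠ 0 := by simpa using hb m
  have orth := @dotProduct_eq_zero_of_mulVec_mulVec_eq_smul _ _ _ _ _ _ hA
  have rot m := dotProduct_eq_zero_and_eq_of_rotation hA (hu m) (hv m) (hb m)
  induction i using blockCases with
  | even m =>
    induction j using blockCases with
    | even l =>
      rcases eq_or_ne m l with rfl | h
      · simp [hu_one]
      · simp [h, orth (hu_sq m) (hu_sq l) (hne h)]
    | odd l =>
      rcases eq_or_ne m l with rfl | h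
      · simp [(rot m).1]
      · simp [orth (hu_sq m) (hv_sq l) (hne h)]
    | last => simp [orth (hu_sq m) hw_sq (hne_zero m)]
  | odd m =>
    induction j using blockCases with
    | even l =>
      rcases eq_or_ne m l with rfl | h
      · simp [dotProduct_comm, (rot m).1]
      · simp [orth (hv_sq m) (hu_sq l) (hne h)]
    | odd l =>
      rcases eq_or_ne m l with rfl | h
      · simp [(rot m).2, hu_one]
      · simp [h, orth (hv_sq m) (hv_sq l) (hne h)]
    | last => simp [orth (hv_sq m) hw_sq (hne_zero m)]
  | last =>
    induction j using blockCases with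
    | even l => simp [orth hw_sq (hu_sq l) (hne_zero l).symm]
    | odd l => simp [orth hw_sq (hv_sq l) (hne_zero l).symm]
    | last => simp [hw_one]

lemma of_interleave_mul_transpose
    (horth : ∀ i j, interleave u v w i ⬝ᵥ interleave u v w j = (1 : Matrix _ _ ℝ) i j) :
    of (interleave u v w) * (of (interleave u v w))ᵀ = 1 := by
  ext i j
  exact horth i j

lemma of_interleave_conj (hu : ∀ m, A *ᵥ u m = b m • v m) (hv : ∀ m, A *ᵥ v m = -(b m • u m))
    (hw : A *ᵥ w = 0)
    (horth : ∀ i j, interleave u v w i ⬝ᵥ interleave u v w j = (1 : Matrix _ _ ℝ) i j) :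
    of (interleave u v w) * A * (of (interleave u v w))ᵀ = diagL (2 * k + 1) k b := by
  ext i j
  rw [mul_mul_apply, transpose_transpose]
  change interleave u v w i ⬝ᵥ A *ᵥ interleave u v w j = _
  induction j using blockCases with
  | even m =>
    rw [interleave_evenIdx, hu, dotProduct_smul, ← interleave_oddIdx u v w m, horth,
      diagL_apply_evenIdx, one_apply]
    split_ifs <;> simp
  | odd m =>
    rw [interleave_oddIdx, hv, dotProduct_neg, dotProduct_smul, ← interleave_evenIdx u v w m,
      horth, diagL_apply_oddIdx, one_apply]
    split_ifs <;> simp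
  | last => rw [interleave_last, hw, dotProduct_zero, diagL_apply_last]

lemma of_interleave_eq_updateRow (w' : Fin (2 * k + 1) → ℝ) :
    of (interleave u v w') = (of (interleave u v w)).updateRow (Fin.last _) w' := by
  ext i j
  induction i using blockCases <;> simp [updateRow_apply]

end frame

lemma soConj_diagL_of_rotations {A : Matrix (Fin (2 * k + 1)) (Fin (2 * k + 1)) ℝ}
    {b : Fin k → ℝ} (hA : Aᵀ = -A) (hb : ∀ m, b m ≠ 0)
    (hb_sq : Pairwise fun m l => b m ^ 2 ≠ b l ^ 2) {u v : Fin k → Fin (2 * k + 1) → ℝ}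
    (hu : ∀ m, A *ᵥ u m = b m • v m) (hv : ∀ m, A *ᵥ v m = -(b m • u m)) (hu_ne : ∀ m, u m ≠ 0) :
    SOConj A (diagL (2 * k + 1) k b) := by
  set s : Fin k → ℝ := fun m => (√(u m ⬝ᵥ u m))⁻¹
  have hu' m : A *ᵥ (s m • u m) = b m • (s m • v m) := by rw [mulVec_smul, hu, smul_comm]
  have hv' m : A *ᵥ (s m • v m) = -(b m • (s m • u m)) := by
    rw [mulVec_smul, hv, smul_neg, smul_comm]
  have hu_one m : (s m • u m) ⬝ᵥ (s m • u m) = 1 := inv_sqrt_smul_dotProduct_self (hu_ne m)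
  obtain ⟨w, hw_ne, hw⟩ := exists_mulVec_eq_zero_of_transpose_eq_neg hA (by simp)
  set w₁ := (√(w ⬝ᵥ w))⁻¹ • w
  have hw₁ : A *ᵥ w₁ = 0 := by rw [mulVec_smul, hw, smul_zero]
  have horth₁ := interleave_orthonormal hA hb hb_sq hu' hv' hw₁ hu_one
    (inv_sqrt_smul_dotProduct_self hw_ne)
  set B₁ := of (interleave (fun m => s m • u m) (fun m => s m • v m) w₁)
  -- Rescaling the last row by `det B₁ = ±1` keeps the frame orthonormal and fixes the sign.
  set d := B₁.det
  have hd : d * d = 1 := by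
    simpa [det_transpose] using congrArg det (of_interleave_mul_transpose horth₁)
  have hdw : A *ᵥ (d • w₁) = 0 := by rw [mulVec_smul, hw₁, smul_zero]
  have horth := interleave_orthonormal hA hb hb_sq hu' hv' hdw hu_one (by
    rw [smul_dotProduct, dotProduct_smul, smul_smul, inv_sqrt_smul_dotProduct_self hw_ne, hd,
      one_smul])
  refine soConj_of_mul_transpose (of_interleave_mul_transpose horth) ?_
    (of_interleave_conj hu' hv' hdw horth)
  rw [of_interleave_eq_updateRow (w := w₁), det_updateRow_smul, ← of_interleave_eq_updateRow]
  exact hd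

lemma exists_soConj_of_strict_interlacing (a b : Fin k → ℝ) (h₁ : ∀ j, a j ^ 2 < b j ^ 2)
    (h₂ : ∀ i j, i < j → b j ^ 2 < a i ^ 2) :
    ∃ Y, SOConj (Aodd k a Y) (diagL (2 * k + 1) k b) := by
  have hα : StrictAnti fun j => a j ^ 2 := fun i j h => (h₁ j).trans (h₂ i j h)
  have hβ : StrictAnti fun j => b j ^ 2 := fun i j h => (h₂ i j h).trans (h₁ i)
  have hβα m j : b m ^ 2 ≠ a j ^ 2 := by
    rcases lt_or_ge j m with h | h
    · exact (h₂ j m h).ne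
    · exact ((hα.antitone h).trans_lt (h₁ m)).ne'
  set r := cauchyWeight (fun j => a j ^ 2) fun j => b j ^ 2
  have hsum m : ∑ j, r j / (b m ^ 2 - a j ^ 2) = 1 :=
    sum_cauchyWeight_div_sub hα.injective _ m (hβα m)
  set c : Fin k → ℝ := fun j => √(r j)
  have hc j : c j ^ 2 = r j := Real.sq_sqrt (cauchyWeight_pos h₁ h₂ j).le
  set y : Fin (2 * k + 1) → ℝ := interleave c 0 0
  set u : Fin k → Fin (2 * k + 1) → ℝ := fun m =>
    interleave 0 (fun l => a l * c l / (a l ^ 2 - b m ^ 2)) 1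
  set v : Fin k → Fin (2 * k + 1) → ℝ := fun m =>
    interleave (fun l => b m * c l / (b m ^ 2 - a l ^ 2)) 0 0
  -- All coordinates of `A u_m = b_m v_m` and `A v_m = -b_m u_m` are algebraic identities, except
  -- the last coordinate of the second one, which is the Cauchy identity `hsum m`.
  have hu m : Aodd k a (fun q => y q.castSucc) *ᵥ u m = b m • v m := by
    funext i
    induction i using blockCases with
    | even l =>
      have hba := sub_ne_zero.mpr (hβα m l)
      have hab := sub_ne_zero.mpr (hβα m l).symm
      simp only [mulVec_Aodd_evenIdx, interleave_oddIdx, neg_mul, interleave_evenIdx,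
        interleave_last, mul_one, Pi.smul_apply, smul_eq_mul, y, u, v]
      field_simp
      ring
    | odd l => simp [u, v, y, mulVec_Aodd_oddIdx]
    | last => simp [u, v, y, mulVec_Aodd_last]
  have hv m : Aodd k a (fun q => y q.castSucc) *ᵥ v m = -(b m • u m) := by
    funext i
    induction i using blockCases with
    | even l => simp [u, v, y, mulVec_Aodd_evenIdx]
    | odd l =>
      have hba := sub_ne_zero.mpr (hβα m l)
      have hab := sub_ne_zero.mpr (hβα m l).symm
      simp only [mulVec_Aodd_oddIdx, interleave_evenIdx, interleave_oddIdx, Pi.zero_apply,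
        interleave_last, mul_zero, add_zero, Pi.neg_apply, Pi.smul_apply, smul_eq_mul, y, v, u]
      field_simp
      ring
    | last =>
      simp only [mulVec_Aodd_last, interleave_evenIdx, interleave_oddIdx, Pi.zero_apply, mul_zero,
        add_zero, Pi.neg_apply, Pi.smul_apply, interleave_last, smul_eq_mul, mul_one, neg_inj, y, v,
        u]
      conv_rhs => rw [← mul_one (b m), ← hsum m, Finset.mul_sum]
      refine Finset.sum_congr rfl fun j _ => ?_
      rw [← hc]
      ring
  refine ⟨_, soConj_diagL_of_rotations (Aodd_transpose a _) (fun m hm => ?_)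
    (fun m l h => hβ.injective.ne h) hu hv fun m hm => by simpa [u] using congrFun hm (Fin.last _)⟩
  have := h₁ m
  rw [hm] at this
  nlinarith [sq_nonneg (a m)]

end OddSkew

lemma isCompact_setOf_transpose_mul_self_eq_one_and_det_eq_one (m : ℕ) :
    IsCompact {B : Matrix (Fin m) (Fin m) ℝ | Bᵀ * B = 1 ∧ B.det = 1} := by
  refine (isCompact_univ_pi fun _ => isCompact_univ_pi fun _ => isCompact_Icc (a := -1) (b := 1)
    ).of_isClosed_subset ?_ fun B hB i _ j _ => ?_
  · exact (isClosed_eq (by fun_prop) continuous_const).inter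
      (isClosed_eq (by fun_prop) continuous_const)
  · have hU : of B ∈ unitaryGroup (Fin m) ℝ := by
      rw [mem_unitaryGroup_iff', star_eq_conjTranspose, conjTranspose_eq_transpose_of_trivial]
      exact hB.1
    exact abs_le.mp (Real.norm_eq_abs _ ▸ entry_norm_bound_of_unitary hU i j)

lemma continuous_diagL (m n : ℕ) : Continuous (diagL m n) := by
  refine continuous_pi fun i => continuous_pi fun j => ?_
  simp only [diagL, of_apply]
  split_ifs <;> fun_prop

lemma continuous_Aodd (k : ℕ) :
    Continuous fun p : (Fin k → ℝ) × (Fin (2 * k) → ℝ) => Aodd k p.1 p.2 := by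
  refine continuous_pi fun i => continuous_pi fun j => ?_
  simp only [Aodd, diagL, of_apply]
  split_ifs <;> fun_prop

lemma isClosed_setOf_exists_soConj_Aodd_diagL (k : ℕ) :
    IsClosed {p : (Fin k → ℝ) × (Fin k → ℝ) |
      ∃ Y, SOConj (Aodd k p.1 Y) (diagL (2 * k + 1) k p.2)} := by
  let SO := {B : Matrix (Fin (2 * k + 1)) (Fin (2 * k + 1)) ℝ | Bᵀ * B = 1 ∧ B.det = 1}
  have : CompactSpace SO :=
    isCompact_iff_compactSpace.mp (isCompact_setOf_transpose_mul_self_eq_one_and_det_eq_one _)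
  let M : ((Fin k → ℝ) × (Fin k → ℝ)) × SO → Matrix (Fin (2 * k + 1)) (Fin (2 * k + 1)) ℝ :=
    fun q => q.2.1ᵀ * diagL (2 * k + 1) k q.1.2 * q.2.1
  have hM : Continuous M := by
    have := continuous_diagL (2 * k + 1) k
    fun_prop
  -- `M q` is of the form `Aodd k a Y` exactly when it equals `Aodd k a` of its own last column.
  have hset : {p : (Fin k → ℝ) × (Fin k → ℝ) |
      ∃ Y, SOConj (Aodd k p.1 Y) (diagL (2 * k + 1) k p.2)} =
      Prod.fst '' {q | Aodd k q.1.1 (fun j => M q j.castSucc (Fin.last _)) = M q} := by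
    ext p
    simp only [Set.mem_ofPred_eq, Set.mem_image, soConj_iff]
    constructor
    · rintro ⟨Y, B, hB, hdet, hX⟩
      refine ⟨(p, ⟨B, hB, hdet⟩), ?_, rfl⟩
      change Aodd k p.1 (fun j => (Bᵀ * diagL (2 * k + 1) k p.2 * B) j.castSucc (Fin.last _)) =
        Bᵀ * diagL (2 * k + 1) k p.2 * B
      rw [← hX]
      congr
      simp [Aodd]
    · rintro ⟨⟨p, B, hB, hdet⟩, h, rfl⟩
      exact ⟨_, B, hB, hdet, h⟩
  rw [hset]
  refine isClosedMap_fst_of_compactSpace _ (isClosed_eq ?_ hM)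
  have hY : Continuous fun q => fun j : Fin (2 * k) => M q j.castSucc (Fin.last _) := by
    fun_prop
  exact (continuous_Aodd k).comp ((continuous_fst.comp continuous_fst).prodMk hY)

lemma abs_le_and_le_of_interlacing {k : ℕ} (hk : 0 < k) {a b : Fin k → ℝ}
    (h1 : ∀ i (h : i + 1 < k), a ⟨i, Nat.lt_of_succ_lt h⟩ ≤ b ⟨i, Nat.lt_of_succ_lt h⟩)
    (h2 : ∀ i (h : i + 1 < k), b ⟨i + 1, h⟩ ≤ a ⟨i, Nat.lt_of_succ_lt h⟩)
    (h3 : |a ⟨k - 1, Nat.sub_lt hk one_pos⟩| ≤ b ⟨k - 1, Nat.sub_lt hk one_pos⟩) :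
    (∀ j, |a j| ≤ b j) ∧ ∀ i j, i < j → b j ≤ a i := by
  have hb_step : ∀ d i (h : i + d < k), b ⟨i + d, h⟩ ≤ b ⟨i, by omega⟩ := by
    intro d
    induction d with
    | zero => exact fun i h => le_rfl
    | succ d ih => exact fun i h => ((h2 (i + d) h).trans (h1 (i + d) h)).trans (ih i (by omega))
  have hb_anti {i j : Fin k} (h : i ≤ j) : b j ≤ b i := by
    simpa [Nat.add_sub_cancel' (Fin.le_def.mp h)] using hb_step (j - i) i (by omega)
  have hba {i j : Fin k} (h : i < j) : b j ≤ a i :=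
    (hb_anti (show ⟨i + 1, by omega⟩ ≤ j from Fin.le_def.mpr h)).trans (h2 i (by omega))
  have hb_nonneg j : 0 ≤ b j :=
    ((abs_nonneg _).trans h3).trans (hb_anti (Fin.le_def.mpr (by simp; omega)))
  refine ⟨fun j => ?_, fun i j h => hba h⟩
  by_cases hj : j.val + 1 < k
  · rw [abs_of_nonneg ((hb_nonneg _).trans (h2 j hj))]
    exact h1 j hj
  · rw [show j = ⟨k - 1, by omega⟩ from Fin.ext (by simp; omega)]
    exact h3

-- The shifts `2(k-j)` of `b_j` and `2(k-j) - 1` of `a_j` decrease strictly along the chain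
-- `b₁, a₁, b₂, a₂, …`, which turns every weak inequality into a strict one.
lemma strict_interlacing_of_perturbation {k : ℕ} {a b : Fin k → ℝ} (habs : ∀ j, |a j| ≤ b j)
    (hba : ∀ i j, i < j → b j ≤ a i) {t : ℝ} (ht : 0 < t) :
    (∀ j, (a j + (2 * (k - j : ℝ) - 1) * t) ^ 2 < (b j + 2 * (k - j : ℝ) * t) ^ 2) ∧
      ∀ i j, i < j → (b j + 2 * (k - j : ℝ) * t) ^ 2 < (a i + (2 * (k - i : ℝ) - 1) * t) ^ 2 := by
  have hk (j : Fin k) : (j : ℝ) + 1 ≤ k := by exact_mod_cast j.isLt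
  refine ⟨fun j => sq_lt_sq' ?_ ?_, fun i j hij => sq_lt_sq' ?_ ?_⟩
  · nlinarith [neg_abs_le (a j), habs j, hk j]
  · nlinarith [le_abs_self (a j), habs j]
  · have hij' : (i : ℝ) + 1 ≤ j := by exact_mod_cast hij
    nlinarith [abs_nonneg (a j), habs j, hba i j hij, hk j, hk i]
  · have hij' : (i : ℝ) + 1 ≤ j := by exact_mod_cast hij
    nlinarith [hba i j hij, hk j]

open Filter Topology OddSkew

/-- Lemma (openodd), existence part: under the interlacing chain
`b₁ ≥ a₁ ≥ b₂ ≥ a₂ ≥ … ≥ a_{k-1} ≥ b_k ≥ |a_k|` there is `Y ∈ ℝ^{2k}` with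
`A(a, Y)` SO(2k+1)-conjugate to `S = diag (L b₁, …, L b_k, 0)`. -/
theorem statement0 (k : ℕ) (hk : 1 ≤ k) (a b : Fin k → ℝ)
    (h1 : ∀ i : ℕ, ∀ h : i + 1 < k, b ⟨i, by omega⟩ ≥ a ⟨i, by omega⟩)
    (h2 : ∀ i : ℕ, ∀ h : i + 1 < k, a ⟨i, by omega⟩ ≥ b ⟨i + 1, h⟩)
    (h3 : b ⟨k - 1, by omega⟩ ≥ |a ⟨k - 1, by omega⟩|) :
    ∃ Y : Fin (2*k) → ℝ, SOConj (Aodd k a Y) (diagL (2*k+1) k b) := by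
  obtain ⟨habs, hba⟩ := abs_le_and_le_of_interlacing hk h1 h2 h3
  let γ : ℝ → (Fin k → ℝ) × (Fin k → ℝ) := fun t =>
    (fun j => a j + (2 * (k - j : ℝ) - 1) * t, fun j => b j + 2 * (k - j : ℝ) * t)
  have hγ : Tendsto γ (𝓝[>] 0) (𝓝 (a, b)) := by
    have : Continuous γ := by fun_prop
    simpa [γ] using (this.tendsto 0).mono_left nhdsWithin_le_nhds
  have hstrict : ∀ t ∈ Set.Ioi (0 : ℝ), γ t ∈ {p : (Fin k → ℝ) × (Fin k → ℝ) |
      ∃ Y, SOConj (Aodd k p.1 Y) (diagL (2 * k + 1) k p.2)} := fun t ht =>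
    have h := strict_interlacing_of_perturbation habs hba ht
    exists_soConj_of_strict_interlacing _ _ h.1 h.2
  exact (isClosed_setOf_exists_soConj_Aodd_diagL k).mem_of_tendsto (x := (a, b)) hγ
    (eventually_nhdsWithin_of_forall hstrict)
end

section
/- Let k ≥ 1, a = (a_1,…,a_k) ∈ ℝ^k and Y = (y_1,…,y_{2k}) ∈ ℝ^{2k}. Then the characteristic polynomial of the (2k+1)×(2k+1) skew-symmetric matrix A(a,Y) equals X·∏_{j=1}^{k}(X² + a_j²) + X·∑_{l=1}^{k} (y_{2l−1}² + y_{2l}²)·∏_{j≠l}(X² + a_j²). -/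
open Matrix Polynomial

/-!
After reindexing `Fin (2k+1)` as `(Fin 2 × Fin k) ⊕ Fin 1`, the matrix `t - A(a, Y)` is bordered:
its corner is the block diagonal `N = diag (t - L aₗ)` and its border is `∓y`. The Schur
complement gives `det (t - A) = det N · (t + yᵀ N⁻¹ y)`. Here `det N = ∏ (t² + aₗ²)` and `N⁻¹` is
block diagonal with blocks `(t² + aₗ²)⁻¹ (t + L aₗ)`, whose skew part drops out of the quadratic
form, so `yᵀ N⁻¹ y = ∑ t (y_{2l}² + y_{2l+1}²) / (t² + aₗ²)`. This proves the identity at every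
`t ≠ 0`, hence as polynomials.
-/

section Bordered

variable {α : Type*} [CommRing α] {n ι : Type*} [Fintype n] [DecidableEq n]
  [Unique ι] [Fintype ι] [DecidableEq ι]

theorem det_fromBlocks_replicateCol_replicateRow (A : Matrix n n α) [Invertible A]
    (u v : n → α) (d : α) :
    (fromBlocks A (replicateCol ι u) (replicateRow ι v) (of fun _ _ => d)).det =
      A.det * (d - v ⬝ᵥ ⅟A *ᵥ u) := by
  rw [det_fromBlocks₁₁, det_unique (_ : Matrix ι ι α), dotProduct_mulVec]
  simp [Matrix.mul_apply, dotProduct, vecMul]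

end Bordered

section BlockDiagonal

variable {R : Type*} [CommSemiring R] {m o : Type*} [Fintype m] [Fintype o] [DecidableEq o]

theorem dotProduct_blockDiagonal_mulVec (B : o → Matrix m m R) (v w : m × o → R) :
    v ⬝ᵥ blockDiagonal B *ᵥ w =
      ∑ l, (fun r => v (r, l)) ⬝ᵥ B l *ᵥ fun r => w (r, l) := by
  simp [dotProduct, mulVec, Fintype.sum_prod_type, blockDiagonal_apply, Finset.mul_sum]
  exact Finset.sum_comm

end BlockDiagonal

def L {R : Type*} [Ring R] (a : R) : Matrix (Fin 2) (Fin 2) R := !![0, -a; a, 0]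

section TwoByTwo

variable {R K : Type*} [CommRing R] [Field K]

theorem det_smul_sub_L (t a : R) : (t • 1 - L a).det = t ^ 2 + a ^ 2 := by
  simp [L, det_fin_two]
  ring

-- `(t - L a)(t + L a) = t² + a²` because `L a * L a = -a²`.
theorem smul_add_L_mul_smul_sub_L {t a : K} (h : t ^ 2 + a ^ 2 ≠ 0) :
    (t ^ 2 + a ^ 2)⁻¹ • (t • 1 + L a) * (t • 1 - L a) = 1 := by
  ext i j
  fin_cases i <;> fin_cases j <;> simp [L, Matrix.mul_apply, Fin.sum_univ_two, one_apply] <;>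
    field_simp <;> ring

theorem dotProduct_smul_add_L_mulVec (c t a : R) (v : Fin 2 → R) :
    v ⬝ᵥ (c • (t • 1 + L a)) *ᵥ v = c * t * (v 0 ^ 2 + v 1 ^ 2) := by
  simp [L, dotProduct, mulVec, Fin.sum_univ_two, one_apply]
  ring

end TwoByTwo

def blockIndexEquiv (k : ℕ) : Fin 2 × Fin k ≃ Fin (2 * k) :=
  (Equiv.prodComm _ _).trans (finProdFinEquiv.trans (finCongr (mul_comm k 2)))

@[simp]
theorem blockIndexEquiv_apply_val {k : ℕ} (r : Fin 2) (l : Fin k) :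
    (blockIndexEquiv k (r, l) : ℕ) = 2 * l + r := by
  simp [blockIndexEquiv, finProdFinEquiv]; ring

theorem diagL_submatrix_blockIndexEquiv (k : ℕ) (a : Fin k → ℝ) :
    (diagL (2 * k) k a).submatrix (blockIndexEquiv k) (blockIndexEquiv k) =
      blockDiagonal fun l => L (a l) := by
  ext ⟨r, l⟩ ⟨s, m⟩
  have hr := r.isLt
  have hs := s.isLt
  have h1 : (2 * l + r : ℕ) / 2 = l := by omega
  have h2 : (2 * m + s : ℕ) / 2 = m := by omega
  have h3 : (2 * l + r : ℕ) % 2 = r := by omega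
  have h4 : (2 * m + s : ℕ) % 2 = s := by omega
  simp only [submatrix_apply, blockDiagonal_apply, diagL, of_apply, blockIndexEquiv_apply_val,
    h1, h2, h3, h4, Fin.val_inj]
  by_cases hlm : l = m
  · subst hlm
    fin_cases r <;> fin_cases s <;> simp [L]
  · simp [hlm]

def borderedIndexEquiv (k : ℕ) : (Fin 2 × Fin k) ⊕ Fin 1 ≃ Fin (2 * k + 1) :=
  (Equiv.sumCongr (blockIndexEquiv k) (Equiv.refl _)).trans finSumFinEquiv

theorem Aodd_submatrix_finSumFinEquiv (k : ℕ) (a : Fin k → ℝ) (Y : Fin (2 * k) → ℝ) :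
    (Aodd k a Y).submatrix finSumFinEquiv finSumFinEquiv =
      fromBlocks (diagL (2 * k) k a) (replicateCol (Fin 1) Y) (-replicateRow (Fin 1) Y) 0 := by
  ext (i | i) (j | j) <;> simp [Aodd]

theorem Aodd_submatrix_borderedIndexEquiv (k : ℕ) (a : Fin k → ℝ) (Y : Fin (2 * k) → ℝ) :
    (Aodd k a Y).submatrix (borderedIndexEquiv k) (borderedIndexEquiv k) =
      fromBlocks (blockDiagonal fun l => L (a l)) (replicateCol (Fin 1) (Y ∘ blockIndexEquiv k))
        (-replicateRow (Fin 1) (Y ∘ blockIndexEquiv k)) 0 := by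
  rw [borderedIndexEquiv, Equiv.coe_trans, ← submatrix_submatrix, Aodd_submatrix_finSumFinEquiv,
    ← diagL_submatrix_blockIndexEquiv]
  ext (i | i) (j | j) <;> simp

theorem scalar_sub_Aodd_submatrix (k : ℕ) (a : Fin k → ℝ) (Y : Fin (2 * k) → ℝ) (t : ℝ) :
    (scalar _ t - Aodd k a Y).submatrix (borderedIndexEquiv k) (borderedIndexEquiv k) =
      fromBlocks (blockDiagonal fun l => t • 1 - L (a l))
        (replicateCol (Fin 1) (-(Y ∘ blockIndexEquiv k)))
        (replicateRow (Fin 1) (Y ∘ blockIndexEquiv k)) (of fun _ _ => t) := by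
  rw [submatrix_sub, Pi.sub_apply, Pi.sub_apply, Aodd_submatrix_borderedIndexEquiv, scalar_apply,
    submatrix_diagonal_equiv]
  ext (⟨r, l⟩ | i) (⟨s, m⟩ | j) <;>
    simp [blockDiagonal_apply, diagonal_apply, one_apply, Prod.ext_iff, Fin.fin_one_eq_zero]
  split_ifs <;> simp_all

theorem prod_mul_add_sum_inv_mul {ι K : Type*} [Fintype ι] [DecidableEq ι] [Field K]
    (f w : ι → K) (t : K) (hf : ∀ l, f l ≠ 0) :
    (∏ l, f l) * (t + ∑ l, (f l)⁻¹ * t * w l) =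
      t * ∏ l, f l + t * ∑ l, w l * ∏ j ∈ Finset.univ.erase l, f j := by
  rw [mul_add, mul_comm, Finset.mul_sum, Finset.mul_sum]
  congr 1
  refine Finset.sum_congr rfl fun l _ => ?_
  rw [← Finset.mul_prod_erase _ f (Finset.mem_univ l)]
  field_simp [hf l]

theorem det_scalar_sub_Aodd (k : ℕ) (a : Fin k → ℝ) (Y : Fin (2 * k) → ℝ) {t : ℝ} (ht : t ≠ 0) :
    (scalar _ t - Aodd k a Y).det =
      t * ∏ l, (t ^ 2 + a l ^ 2) + t * ∑ l, (Y (blockIndexEquiv k (0, l)) ^ 2 +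
        Y (blockIndexEquiv k (1, l)) ^ 2) * ∏ j ∈ Finset.univ.erase l, (t ^ 2 + a j ^ 2) := by
  have hne (l) : t ^ 2 + a l ^ 2 ≠ 0 := by positivity
  have hinv : (blockDiagonal fun l => (t ^ 2 + a l ^ 2)⁻¹ • (t • 1 + L (a l))) *
      (blockDiagonal fun l => t • 1 - L (a l)) = 1 := by
    rw [← blockDiagonal_mul]
    simp_rw [smul_add_L_mul_smul_sub_L (hne _)]
    exact blockDiagonal_one
  let _ := invertibleOfLeftInverse _ _ hinv
  rw [← det_submatrix_equiv_self (borderedIndexEquiv k), scalar_sub_Aodd_submatrix,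
    det_fromBlocks_replicateCol_replicateRow, det_blockDiagonal, mulVec_neg, dotProduct_neg,
    sub_neg_eq_add, invOf_eq_left_inv hinv, dotProduct_blockDiagonal_mulVec]
  simp only [det_smul_sub_L, dotProduct_smul_add_L_mulVec, Function.comp_apply]
  rw [prod_mul_add_sum_inv_mul _ _ _ hne]

/-- The characteristic polynomial of the bordered skew-symmetric matrix `A(a, Y)`:
`χ(X) = X·∏ⱼ(X² + aⱼ²) + X·∑ₗ (y_{2l-1}² + y_{2l}²)·∏_{j≠l}(X² + aⱼ²)`. -/
theorem statement6 (k : ℕ) (a : Fin k → ℝ) (Y : Fin (2*k) → ℝ) :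
    (Aodd k a Y).charpoly =
      X * ∏ j : Fin k, (X ^ 2 + C (a j ^ 2)) +
      X * ∑ l : Fin k,
        C (Y ⟨2 * l.val, by have := l.isLt; omega⟩ ^ 2 +
           Y ⟨2 * l.val + 1, by have := l.isLt; omega⟩ ^ 2) *
        ∏ j ∈ Finset.univ.erase l, (X ^ 2 + C (a j ^ 2)) := by
  refine eq_of_infinite_eval_eq _ _ <| (Set.finite_singleton 0).infinite_compl.mono fun t ht => ?_
  have h0 (l : Fin k) : blockIndexEquiv k (0, l) = ⟨2 * l, by omega⟩ := Fin.ext (by simp)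
  have h1 (l : Fin k) : blockIndexEquiv k (1, l) = ⟨2 * l + 1, by omega⟩ := Fin.ext (by simp)
  simp only [Set.mem_ofPred_eq, eval_charpoly, det_scalar_sub_Aodd k a Y ht, h0, h1]
  simp [eval_prod, eval_finsetSum]
end

section
/- Let k ≥ 1 and let A and S be real skew-symmetric (2k+1)×(2k+1) matrices. Then A and S are SO(2k+1)-conjugate if and only if A and S have the same characteristic polynomial. -/
/-!
For a real skew-symmetric `A`, the complex matrix `i A` is Hermitian, and Hermitian matrices with
the same characteristic polynomial are unitarily conjugate by the spectral theorem. So equal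
characteristic polynomials give a unitary `W` with `W A = S W`. Writing `W = P + i Q` with `P, Q`
real, both `P` and `Q` intertwine `A` and `S`, and since `t ↦ det (P + t Q)` is a real polynomial
that does not vanish at `i`, some real `T = P + t Q` is invertible with `T A = S T`. Skewness makes
`TᵀT` commute with `A`, so the orthogonal factor `O = T (TᵀT)^(-1/2)` of the polar decomposition
still satisfies `O A = S O`. Finally, in odd dimension `-O` fixes the sign of the determinant.
-/

open Matrix Polynomial

open scoped MatrixOrder

namespace Matrix

section Complex

variable {l m n : Type*}

theorem isHermitian_I_smul_map_ofReal {A : Matrix n n ℝ} (hA : Aᵀ = -A) :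
    (Complex.I • A.map Complex.ofReal).IsHermitian := by
  ext i j
  have hij : A j i = -A i j := by simpa using congrFun (congrFun hA i) j
  simp [hij]

variable [Fintype m]

theorem map_mul_map_ofReal (f : ℂ →ₗ[ℝ] ℝ) (M : Matrix l m ℂ) (A : Matrix m n ℝ) :
    (M * A.map Complex.ofReal).map f = M.map f * A := by
  ext i j
  simp [mul_apply, mul_comm (M _ _), ← Complex.real_smul, mul_comm (A _ _)]

theorem map_map_ofReal_mul (f : ℂ →ₗ[ℝ] ℝ) (A : Matrix l m ℝ) (M : Matrix m n ℂ) :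
    (A.map Complex.ofReal * M).map f = A * M.map f := by
  ext i j
  simp [mul_apply, ← Complex.real_smul]

end Complex

variable {n : Type*} [Fintype n] [DecidableEq n]

theorem charpoly_units_smul {R : Type*} [CommRing R] (c : Rˣ) (M : Matrix n n R) :
    ((c : R) • M).charpoly =
      C ((c : R) ^ Fintype.card n) * M.charpoly.comp (C (↑c⁻¹ : R) * X) := by
  have hchar : charmatrix ((c : R) • M) =
      C (c : R) • (compRingHom (C (↑c⁻¹ : R) * X)).mapMatrix (charmatrix M) := by
    ext i j
    by_cases h : i = j <;> simp [h, mul_sub]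
  rw [charpoly, hchar, det_smul, ← RingHom.map_det, C_pow]
  rfl

theorem charpoly_mul_mul_inv {R : Type*} [CommRing R] {B : Matrix n n R} (hB : IsUnit B.det)
    (A : Matrix n n R) : (B * A * B⁻¹).charpoly = A.charpoly := by
  rw [charpoly_mul_comm, ← Matrix.mul_assoc, nonsing_inv_mul B hB, Matrix.one_mul]

theorem mul_mul_inv_eq_of_mul_eq_mul {R : Type*} [CommRing R] {A B S : Matrix n n R}
    (hB : IsUnit B.det) (h : B * A = S * B) : B * A * B⁻¹ = S := by
  rw [h, mul_nonsing_inv_cancel_right _ _ hB]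

theorem IsHermitian.exists_unitary_conj_of_charpoly_eq {𝕜 : Type*} [RCLike 𝕜]
    {A B : Matrix n n 𝕜} (hA : A.IsHermitian) (hB : B.IsHermitian)
    (h : A.charpoly = B.charpoly) :
    ∃ U : unitary (Matrix n n 𝕜), Unitary.conjStarAlgAut 𝕜 _ U A = B := by
  refine ⟨hB.eigenvectorUnitary * star hA.eigenvectorUnitary, ?_⟩
  rw [Unitary.conjStarAlgAut_mul_apply, hA.conjStarAlgAut_star_eigenvectorUnitary,
    (hA.eigenvalues_eq_eigenvalues_iff hB).mpr h, ← hB.spectral_theorem]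

theorem exists_unitary_mul_eq_mul_of_charpoly_eq {A S : Matrix n n ℝ} (hA : Aᵀ = -A)
    (hS : Sᵀ = -S) (h : A.charpoly = S.charpoly) :
    ∃ W ∈ unitaryGroup n ℂ, W * A.map Complex.ofReal = S.map Complex.ofReal * W := by
  have hchar : (Complex.I • A.map Complex.ofReal).charpoly =
      (Complex.I • S.map Complex.ofReal).charpoly := by
    have hmap (B : Matrix n n ℝ) :
        (B.map Complex.ofReal).charpoly = B.charpoly.map Complex.ofRealHom :=
      charpoly_map B Complex.ofRealHom
    have hI : IsUnit Complex.I := isUnit_iff_ne_zero.mpr Complex.I_ne_zero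
    rw [← hI.unit_spec, charpoly_units_smul, charpoly_units_smul, hmap, hmap, h]
  obtain ⟨U, hU⟩ := (isHermitian_I_smul_map_ofReal hA).exists_unitary_conj_of_charpoly_eq
    (isHermitian_I_smul_map_ofReal hS) hchar
  rw [map_smul] at hU
  replace hU := smul_right_injective _ Complex.I_ne_zero hU
  refine ⟨U, U.2, ?_⟩
  rw [← hU, Unitary.conjStarAlgAut_apply, Matrix.mul_assoc _ (star _), Unitary.coe_star_mul_self,
    Matrix.mul_one]

theorem exists_isUnit_det_add_smul {P Q : Matrix n n ℝ}
    (h : IsUnit (P.map Complex.ofReal + Complex.I • Q.map Complex.ofReal).det) :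
    ∃ t : ℝ, IsUnit (P + t • Q).det := by
  set N : Matrix n n ℝ[X] := P.map C + (X : ℝ[X]) • Q.map C
  have hN : N.det ≠ 0 := by
    intro hN
    have hI : aeval Complex.I N.det =
        (P.map Complex.ofReal + Complex.I • Q.map Complex.ofReal).det := by
      rw [AlgHom.map_det]
      congr 1
      ext i j
      simp [N, mul_comm _ Complex.I]
    rw [hN, map_zero] at hI
    exact h.ne_zero hI.symm
  have heval (t : ℝ) : eval t N.det = (P + t • Q).det := by
    rw [← coe_evalRingHom, RingHom.map_det]
    congr 1
    ext i j
    simp [N, mul_comm _ t]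
  obtain ⟨t, ht⟩ : ∃ t : ℝ, eval t N.det ≠ 0 := by
    by_contra! hzero
    exact hN (Polynomial.funext (by simpa using hzero))
  exact ⟨t, isUnit_iff_ne_zero.mpr (heval t ▸ ht)⟩

theorem exists_real_mul_eq_mul_of_complex {A S : Matrix n n ℝ} {M : Matrix n n ℂ}
    (hM : IsUnit M.det) (h : M * A.map Complex.ofReal = S.map Complex.ofReal * M) :
    ∃ T : Matrix n n ℝ, IsUnit T.det ∧ T * A = S * T := by
  have hpart (f : ℂ →ₗ[ℝ] ℝ) : M.map f * A = S * M.map f := by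
    rw [← map_mul_map_ofReal, h, map_map_ofReal_mul]
  have hreim : (M.map Complex.re).map Complex.ofReal +
      Complex.I • (M.map Complex.im).map Complex.ofReal = M := by
    ext i j
    simp [mul_comm Complex.I, Complex.re_add_im]
  obtain ⟨t, ht⟩ := exists_isUnit_det_add_smul (hreim.symm ▸ hM)
  refine ⟨_, ht, ?_⟩
  rw [Matrix.add_mul, Matrix.mul_add, Matrix.smul_mul, Matrix.mul_smul]
  exact congrArg₂ _ (hpart Complex.reLm) (congrArg _ (hpart Complex.imLm))

theorem exists_orthogonal_mul_eq_mul_of_skew {A S T : Matrix n n ℝ} (hA : Aᵀ = -A)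
    (hS : Sᵀ = -S) (hT : IsUnit T.det) (hTA : T * A = S * T) :
    ∃ O : Matrix n n ℝ, Oᵀ * O = 1 ∧ O * A = S * O := by
  have hATt : A * Tᵀ = Tᵀ * S := by
    simpa [hA, hS] using congrArg transpose hTA
  have hcomm : Commute (Tᵀ * T) A := by
    rw [commute_iff_eq, Matrix.mul_assoc, hTA, ← Matrix.mul_assoc, ← hATt, Matrix.mul_assoc]
  have hP : (Tᵀ * T).PosSemidef := by
    simpa using posSemidef_conjTranspose_mul_self T
  set K := CFC.sqrt (Tᵀ * T)
  have hKK : K * K = Tᵀ * T := CFC.sqrt_mul_sqrt_self _ hP.nonneg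
  have hKt : Kᵀ = K := (CFC.sqrt_nonneg (Tᵀ * T)).posSemidef.1
  have hKA : Commute K A := by
    rw [show K = cfc NNReal.sqrt (Tᵀ * T) from CFC.sqrt_eq_cfc]
    exact hcomm.cfc_nnreal _
  have hK : IsUnit K.det := by
    have hsq : IsUnit (K.det * K.det) := by
      rw [← det_mul, hKK, det_mul, det_transpose]
      exact hT.mul hT
    exact isUnit_of_mul_isUnit_left hsq
  refine ⟨T * K⁻¹, ?_, ?_⟩
  · rw [transpose_mul, transpose_nonsing_inv, hKt, Matrix.mul_assoc, ← Matrix.mul_assoc Tᵀ,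
      ← hKK, ← Matrix.mul_assoc, ← Matrix.mul_assoc, nonsing_inv_mul _ hK, Matrix.one_mul,
      mul_nonsing_inv _ hK]
  · have hKinvA : Commute K⁻¹ A := by
      have hKunit : IsUnit K := (isUnit_iff_isUnit_det K).mpr hK
      simpa only [coe_units_inv, hKunit.unit_spec] using hKA.units_inv_left (u := hKunit.unit)
    rw [Matrix.mul_assoc, hKinvA.eq, ← Matrix.mul_assoc, hTA, Matrix.mul_assoc]

end Matrix

theorem SOConj.of_orthogonal {m : ℕ} (hm : Odd m) {A S O : Matrix (Fin m) (Fin m) ℝ}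
    (hO : Oᵀ * O = 1) (hOA : O * A = S * O) : SOConj A S := by
  have hdet : O.det * O.det = 1 := by
    simpa [det_transpose] using congrArg det hO
  have hunit : IsUnit O.det := IsUnit.of_mul_eq_one _ hdet
  rcases mul_self_eq_one_iff.mp hdet with hpos | hneg
  · exact ⟨O, hO, hpos, mul_mul_inv_eq_of_mul_eq_mul hunit hOA⟩
  · refine ⟨-O, by simpa using hO, by simp [det_neg, hneg, hm.neg_one_pow], ?_⟩
    exact mul_mul_inv_eq_of_mul_eq_mul (by simpa [det_neg] using hunit) (by simp [hOA])

theorem SOConj.charpoly_eq {m : ℕ} {A S : Matrix (Fin m) (Fin m) ℝ} (h : SOConj A S) :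
    A.charpoly = S.charpoly := by
  obtain ⟨B, -, hB, rfl⟩ := h
  exact (charpoly_mul_mul_inv (by simp [hB]) A).symm

theorem statement7_general (k : ℕ) (A S : Matrix (Fin (2*k+1)) (Fin (2*k+1)) ℝ)
    (hA : Aᵀ = -A) (hS : Sᵀ = -S) :
    SOConj A S ↔ A.charpoly = S.charpoly := by
  refine ⟨SOConj.charpoly_eq, fun h => ?_⟩
  obtain ⟨W, hW, hWA⟩ := exists_unitary_mul_eq_mul_of_charpoly_eq hA hS h
  obtain ⟨T, hT, hTA⟩ :=
    exists_real_mul_eq_mul_of_complex (UnitaryGroup.det_isUnit ⟨W, hW⟩) hWA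
  obtain ⟨O, hO, hOA⟩ := exists_orthogonal_mul_eq_mul_of_skew hA hS hT hTA
  exact SOConj.of_orthogonal (odd_two_mul_add_one k) hO hOA

/-- Two real skew-symmetric matrices of odd size `2k+1` are SO(2k+1)-conjugate
if and only if they have the same characteristic polynomial. -/
theorem statement7 (k : ℕ) (hk : 1 ≤ k) (A S : Matrix (Fin (2*k+1)) (Fin (2*k+1)) ℝ)
    (hA : Aᵀ = -A) (hS : Sᵀ = -S) :
    SOConj A S ↔ A.charpoly = S.charpoly :=
  statement7_general k A S hA hS
end

section
/- Let k ≥ 1 and let μ_1 ≥ ν_1 ≥ μ_2 ≥ ν_2 ≥ … ≥ μ_{2k−1} ≥ ν_{2k−1} ≥ μ_{2k} be real numbers. Then there exist x_1,…,x_{2k−1} ∈ ℂ and x_{2k} ∈ ℝ such that the Hermitian matrix H(ν,x) has characteristic polynomial ∏_{l=1}^{2k}(X − μ_l), i.e., has eigenvalues μ_1,…,μ_{2k} (with multiplicity). -/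
open Matrix Polynomial
open Finset

/-- The `2k × 2k` complex Hermitian matrix `H(ν, x)` with diagonal
`(ν₁, …, ν_{2k-1}, xlast)`, whose `(i, 2k)` entry is the conjugate of `x i` and whose
`(2k, i)` entry is `x i` for `1 ≤ i ≤ 2k-1`, all other entries `0`. -/
def Hmat (k : ℕ) (ν : Fin (2*k-1) → ℝ) (x : Fin (2*k-1) → ℂ) (xlast : ℝ) :
    Matrix (Fin (2*k)) (Fin (2*k)) ℂ :=
  Matrix.of fun i j =>
    if hi : i.val < 2*k-1 then
      if hj : j.val < 2*k-1 then (if i = j then (ν ⟨i.val, hi⟩ : ℂ) else 0)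
      else (starRingEnd ℂ) (x ⟨i.val, hi⟩)
    else if hj : j.val < 2*k-1 then x ⟨j.val, hj⟩ else (xlast : ℂ)


lemma prod_neg' {ι : Type*} (s : Finset ι) (f : ι → ℝ) :
    ∏ i ∈ s, (-f i) = (-1) ^ s.card * ∏ i ∈ s, f i := by
  rw [← Finset.prod_const (-1 : ℝ), ← Finset.prod_mul_distrib]
  simp

lemma succAbove_mk {N : ℕ} (P : Fin (N+1)) (i : ℕ) (hi : i < N) :
    P.succAbove ⟨i, hi⟩ = if i < P.val then ⟨i, by omega⟩ else ⟨i+1, by omega⟩ := by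
  split_ifs with hc
  · rw [Fin.succAbove_of_castSucc_lt]
    · rfl
    · simpa [Fin.lt_def] using hc
  · rw [Fin.succAbove_of_le_castSucc]
    · rfl
    · simpa [Fin.le_def] using Nat.le_of_not_lt hc

lemma erase_eq_Iio_union_Ioi {N : ℕ} (i : Fin N) :
    (univ : Finset (Fin N)).erase i = Finset.Iio i ∪ Finset.Ioi i := by
  ext j
  simp only [Finset.mem_erase, Finset.mem_union, Finset.mem_Iio, Finset.mem_Ioi, Finset.mem_univ,
    and_true]
  constructor
  · exact fun h => lt_or_gt_of_ne h
  · rintro (h | h)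
    · exact ne_of_lt h
    · exact ne_of_gt h

lemma univ_eq_Iic_union_Ioi {N : ℕ} (i : Fin N) :
    (univ : Finset (Fin N)) = Finset.Iic i ∪ Finset.Ioi i := by
  ext j
  simp [Finset.mem_Iic, Finset.mem_Ioi, le_or_gt]

lemma anti_of_adjacent {N : ℕ} (f : Fin N → ℝ)
    (hf : ∀ i : ℕ, ∀ h : i + 1 < N, f ⟨i+1, h⟩ ≤ f ⟨i, by omega⟩) :
    ∀ a b : ℕ, ∀ ha : a < N, ∀ hb : b < N, a ≤ b → f ⟨b, hb⟩ ≤ f ⟨a, ha⟩ := by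
  intro a b
  induction b with
  | zero => intro ha hb hab; have : a = 0 := by omega
            subst this; exact le_refl _
  | succ b ih =>
    intro ha hb hab
    rcases Nat.eq_or_lt_of_le hab with h1 | h1
    · subst h1; exact le_refl _
    · exact le_trans (hf b hb) (ih ha (by omega) (by omega))

lemma strictanti_of_adjacent {N : ℕ} (f : Fin N → ℝ)
    (hf : ∀ i : ℕ, ∀ h : i + 1 < N, f ⟨i+1, h⟩ < f ⟨i, by omega⟩) :
    ∀ a b : ℕ, ∀ ha : a < N, ∀ hb : b < N, a < b → f ⟨b, hb⟩ < f ⟨a, ha⟩ := by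
  intro a b
  induction b with
  | zero => omega
  | succ b ih =>
    intro ha hb hab
    rcases Nat.eq_or_lt_of_le hab with h1 | h1
    · have : a = b := by omega
      subst this; exact hf a hb
    · exact lt_trans (hf b hb) (ih ha (by omega) (by omega))

lemma key : ∀ n : ℕ, 1 ≤ n → ∀ (μ : Fin (n+1) → ℝ) (ν : Fin n → ℝ),
    (∀ i : ℕ, ∀ hi : i < n, ν ⟨i, hi⟩ ≤ μ ⟨i, by omega⟩ ∧ μ ⟨i+1, by omega⟩ ≤ ν ⟨i, hi⟩) →
    ∃ (c : Fin n → ℝ) (t : ℝ), (∀ i, 0 ≤ c i) ∧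
      (∏ l, (X - C (μ l)) : ℝ[X]) =
        (X - C t) * ∏ i, (X - C (ν i)) -
          ∑ i, C (c i) * ∏ j ∈ univ.erase i, (X - C (ν j)) := by
  intro n
  induction n using Nat.strong_induction_on with
  | _ n IH =>
  intro hn μ ν h
  obtain ⟨m, rfl⟩ : ∃ m, n = m + 1 := ⟨n - 1, by omega⟩
  by_cases hdup : ∃ p : Fin m, ν p.castSucc = ν p.succ
  · -- duplicate case
    obtain ⟨p, hp⟩ := hdup
    have hm : 1 ≤ m := by have := p.isLt; omega
    have hpeq : ν (⟨p.val, by omega⟩ : Fin (m+1)) = ν ⟨p.val+1, by omega⟩ := by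
      have e1 : (⟨p.val, by omega⟩ : Fin (m+1)) = p.castSucc := by apply Fin.ext; simp
      have e2 : (⟨p.val+1, by omega⟩ : Fin (m+1)) = p.succ := by apply Fin.ext; simp
      rw [e1, e2]; exact hp
    have hν'val : ∀ (i : ℕ) (hi : i < m), ν (p.succ.succAbove ⟨i, hi⟩) =
        if i < p.val + 1 then ν ⟨i, by omega⟩ else ν ⟨i+1, by omega⟩ := by
      intro i hi
      rw [succAbove_mk]
      simp only [Fin.val_succ, apply_ite ν]
    have hμ'val : ∀ (i : ℕ) (hi : i < m+1), μ (p.succ.castSucc.succAbove ⟨i, hi⟩) =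
        if i < p.val + 1 then μ ⟨i, by omega⟩ else μ ⟨i+1, by omega⟩ := by
      intro i hi
      rw [succAbove_mk]
      simp only [Fin.coe_castSucc, Fin.val_succ, apply_ite μ]
    have h' : ∀ i : ℕ, ∀ hi : i < m,
        (fun j => ν (p.succ.succAbove j)) ⟨i, hi⟩ ≤ (fun l => μ (p.succ.castSucc.succAbove l)) ⟨i, by omega⟩ ∧
        (fun l => μ (p.succ.castSucc.succAbove l)) ⟨i+1, by omega⟩ ≤ (fun j => ν (p.succ.succAbove j)) ⟨i, hi⟩ := by
      intro i hi
      simp only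
      rw [hν'val i hi, hμ'val i (by omega), hμ'val (i+1) (by omega)]
      rcases Nat.lt_trichotomy i p.val with hc | hc | hc
      · rw [if_pos (by omega), if_pos (by omega), if_pos (by omega)]
        exact ⟨(h i (by omega)).1, (h i (by omega)).2⟩
      · subst hc
        rw [if_pos (by omega), if_pos (by omega), if_neg (by omega)]
        refine ⟨(h p.val (by omega)).1, ?_⟩
        rw [hpeq]
        exact (h (p.val+1) (by omega)).2
      · rw [if_neg (by omega), if_neg (by omega), if_neg (by omega)]
        exact ⟨(h (i+1) (by omega)).1, (h (i+1) (by omega)).2⟩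
    obtain ⟨c', t, hc', heq⟩ := IH m (by omega) hm
      (fun l => μ (p.succ.castSucc.succAbove l)) (fun j => ν (p.succ.succAbove j)) h'
    have hμQ : μ p.succ.castSucc = ν p.succ := by
      have h1 := (h p.val (by omega)).2
      have h2 := (h (p.val+1) (by omega)).1
      have e1 : μ p.succ.castSucc = μ ⟨p.val+1, by omega⟩ := by congr 1
      have e2 : ν p.succ = ν ⟨p.val+1, by omega⟩ := by congr 1
      rw [e1, e2]
      rw [hpeq] at h1
      exact le_antisymm h1 h2
    obtain ⟨cc, hccP, hccS⟩ : ∃ cc : Fin (m+1) → ℝ,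
        cc p.succ = 0 ∧ ∀ i : Fin m, cc (p.succ.succAbove i) = c' i :=
      ⟨p.succ.insertNth 0 c', Fin.insertNth_apply_same (α := fun _ => ℝ) p.succ 0 c',
        fun i => Fin.insertNth_apply_succAbove (α := fun _ => ℝ) p.succ 0 c' i⟩
    refine ⟨cc, t, ?_, ?_⟩
    · intro j
      rcases eq_or_ne j p.succ with rfl | hne
      · rw [hccP]
      · obtain ⟨i, rfl⟩ := Fin.exists_succAbove_eq hne
        rw [hccS]
        exact hc' i
    · have hprodμ : (∏ l, (X - C (μ l)) : ℝ[X]) =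
          (X - C (μ p.succ.castSucc)) * ∏ l : Fin (m+1), (X - C (μ (p.succ.castSucc.succAbove l))) :=
        Fin.prod_univ_succAbove (fun l => (X : ℝ[X]) - C (μ l)) p.succ.castSucc
      have hprodν : (∏ i, (X - C (ν i)) : ℝ[X]) =
          (X - C (ν p.succ)) * ∏ i : Fin m, (X - C (ν (p.succ.succAbove i))) :=
        Fin.prod_univ_succAbove (fun i => (X : ℝ[X]) - C (ν i)) p.succ
      have hR : ∀ i : Fin m, (∏ j ∈ univ.erase (p.succ.succAbove i), (X - C (ν j)) : ℝ[X]) =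
          (X - C (ν p.succ)) * ∏ j ∈ univ.erase i, (X - C (ν (p.succ.succAbove j))) := by
        intro i
        apply mul_left_cancel₀ (X_sub_C_ne_zero (ν (p.succ.succAbove i)))
        rw [Finset.mul_prod_erase univ (fun j => (X:ℝ[X]) - C (ν j))
            (Finset.mem_univ (p.succ.succAbove i)), hprodν, mul_left_comm,
          Finset.mul_prod_erase univ (fun j => (X:ℝ[X]) - C (ν (p.succ.succAbove j)))
            (Finset.mem_univ i)]
      have hsum : (∑ j : Fin (m+1), C (cc j) *
            ∏ l ∈ univ.erase j, (X - C (ν l)) : ℝ[X]) =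
          (X - C (ν p.succ)) * ∑ i : Fin m, C (c' i) *
            ∏ j ∈ univ.erase i, (X - C (ν (p.succ.succAbove j))) := by
        rw [Fin.sum_univ_succAbove (fun j => C (cc j) *
          ∏ l ∈ univ.erase j, ((X : ℝ[X]) - C (ν l))) p.succ]
        simp only [hccP, hccS, map_zero, zero_mul, zero_add]
        rw [Finset.mul_sum]
        refine Finset.sum_congr rfl fun i _ => ?_
        rw [hR i]; ring
      rw [hprodμ, hμQ, heq, hsum, hprodν]
      ring
  · -- injective case
    push_neg at hdup
    have hadj : ∀ i : ℕ, ∀ hi : i + 1 < m+1, ν ⟨i+1, hi⟩ < ν ⟨i, by omega⟩ := by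
      intro i hi
      have hle : ν ⟨i+1, hi⟩ ≤ ν ⟨i, by omega⟩ :=
        le_trans (h (i+1) (by omega)).1 (h i (by omega)).2
      refine lt_of_le_of_ne hle fun heq => ?_
      apply hdup ⟨i, by omega⟩
      have e1 : (⟨i, by omega⟩ : Fin m).castSucc = (⟨i, by omega⟩ : Fin (m+1)) := by
        apply Fin.ext; simp
      have e2 : (⟨i, by omega⟩ : Fin m).succ = (⟨i+1, by omega⟩ : Fin (m+1)) := by
        apply Fin.ext; simp
      rw [e1, e2]
      exact heq.symm
    have hstrict := strictanti_of_adjacent ν hadj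
    have hmono := anti_of_adjacent ν (fun i hi => le_of_lt (hadj i hi))
    have hinj : Set.InjOn ν (univ : Finset (Fin (m+1))) := by
      intro a _ b _ hab
      by_contra hne
      rcases Nat.lt_trichotomy a.val b.val with hc | hc | hc
      · exact absurd hab (ne_of_gt (hstrict a.val b.val a.isLt b.isLt hc))
      · exact hne (Fin.ext hc)
      · exact absurd hab (ne_of_lt (hstrict b.val a.val b.isLt a.isLt hc))
    have hQmonic : (∏ i, (X - C (ν i)) : ℝ[X]).Monic :=
      monic_prod_of_monic _ _ fun i _ => monic_X_sub_C _
    have hPmonic : (∏ l, (X - C (μ l)) : ℝ[X]).Monic :=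
      monic_prod_of_monic _ _ fun l _ => monic_X_sub_C _
    have hQdeg : (∏ i, (X - C (ν i)) : ℝ[X]).natDegree = m+1 := by
      rw [natDegree_prod_of_monic _ _ fun i _ => monic_X_sub_C _]
      simp [natDegree_X_sub_C]
    have hPdeg : (∏ l, (X - C (μ l)) : ℝ[X]).natDegree = m+2 := by
      rw [natDegree_prod_of_monic _ _ fun l _ => monic_X_sub_C _]
      simp [natDegree_X_sub_C]
    have hQnext : (∏ i, (X - C (ν i)) : ℝ[X]).coeff m = -∑ i, ν i := by
      have h1 := prod_X_sub_C_nextCoeff (s := (univ : Finset (Fin (m+1)))) ν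
      rwa [nextCoeff_of_natDegree_pos (by rw [hQdeg]; omega), hQdeg, Nat.add_sub_cancel] at h1
    have hPnext : (∏ l, (X - C (μ l)) : ℝ[X]).coeff (m+1) = -∑ l, μ l := by
      have h1 := prod_X_sub_C_nextCoeff (s := (univ : Finset (Fin (m+1+1)))) μ
      rwa [nextCoeff_of_natDegree_pos (by rw [hPdeg]; omega), hPdeg,
        show m + 2 - 1 = m + 1 from rfl] at h1
    have hQtop : (∏ i, (X - C (ν i)) : ℝ[X]).coeff (m+1) = 1 := by
      have := hQmonic.coeff_natDegree; rwa [hQdeg] at this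
    have hPtop : (∏ l, (X - C (μ l)) : ℝ[X]).coeff (m+2) = 1 := by
      have := hPmonic.coeff_natDegree; rwa [hPdeg] at this
    set tt : ℝ := (∑ l, μ l) - ∑ i, ν i with htt
    set sP : ℝ[X] := (X - C tt) * ∏ i, (X - C (ν i)) - ∏ l, (X - C (μ l)) with hsPdef
    have hscoeff : ∀ j : ℕ, m + 1 ≤ j → sP.coeff j = 0 := by
      intro j hj
      obtain ⟨j', rfl⟩ : ∃ j', j = j' + 1 := ⟨j - 1, by omega⟩
      rw [hsPdef, coeff_sub, sub_mul, coeff_sub, coeff_X_mul, coeff_C_mul]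
      rcases (by omega : j' = m ∨ j' = m + 1 ∨ m + 2 ≤ j') with rfl | rfl | hbig
      · rw [hQnext, hQtop, hPnext, htt]; ring
      · rw [hQtop, hPtop,
          coeff_eq_zero_of_natDegree_lt (by rw [hQdeg]; omega)]
        ring
      · rw [coeff_eq_zero_of_natDegree_lt (by rw [hQdeg]; omega),
          coeff_eq_zero_of_natDegree_lt (by rw [hQdeg]; omega),
          coeff_eq_zero_of_natDegree_lt (by rw [hPdeg]; omega)]
        ring
    have hdeg : sP.degree < (#(univ : Finset (Fin (m+1))) : ℕ) := by
      rw [Finset.card_univ, Fintype.card_fin]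
      exact (degree_lt_iff_coeff_zero _ _).mpr fun j hj => hscoeff j (by exact_mod_cast hj)
    have hs := Lagrange.eq_interpolate (s := (univ : Finset (Fin (m+1)))) (v := ν)
      (f := sP) hinj hdeg
    have hbasis : ∀ i : Fin (m+1), Lagrange.basis univ ν i =
        C ((∏ j ∈ univ.erase i, (ν i - ν j))⁻¹) * ∏ j ∈ univ.erase i, (X - C (ν j)) := by
      intro i
      rw [Lagrange.basis]
      simp only [Lagrange.basisDivisor]
      rw [Finset.prod_mul_distrib, ← map_prod, Finset.prod_inv_distrib]
    have hSsum : sP = ∑ i : Fin (m+1),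
        C (eval (ν i) sP * (∏ j ∈ univ.erase i, (ν i - ν j))⁻¹) *
          ∏ j ∈ univ.erase i, (X - C (ν j)) := by
      conv_lhs => rw [hs]
      rw [Lagrange.interpolate_apply]
      refine Finset.sum_congr rfl fun i _ => ?_
      rw [hbasis i, C_mul]
      ring
    have hBpos : ∀ i : Fin (m+1), 0 < (-1 : ℝ)^(i.val) * ∏ j ∈ univ.erase i, (ν i - ν j) := by
      intro i
      have hdisj : Disjoint (Finset.Iio i) (Finset.Ioi i) := by
        rw [Finset.disjoint_left]
        intro a ha hb
        rw [Finset.mem_Iio] at ha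
        rw [Finset.mem_Ioi] at hb
        exact absurd (ha.trans hb) (lt_irrefl _)
      have e1 : ∏ j ∈ Finset.Iio i, (ν i - ν j) =
          (-1 : ℝ)^(i.val) * ∏ j ∈ Finset.Iio i, (ν j - ν i) := by
        rw [← Fin.card_Iio i, ← prod_neg']
        exact Finset.prod_congr rfl fun j _ => by ring
      have h2 : (0:ℝ) < ∏ j ∈ Finset.Iio i, (ν j - ν i) :=
        Finset.prod_pos fun j hj => by
          rw [Finset.mem_Iio] at hj
          have := hstrict j.val i.val j.isLt i.isLt hj
          simpa using sub_pos.mpr this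
      have h3 : (0:ℝ) < ∏ j ∈ Finset.Ioi i, (ν i - ν j) :=
        Finset.prod_pos fun j hj => by
          rw [Finset.mem_Ioi] at hj
          have := hstrict i.val j.val i.isLt j.isLt hj
          simpa using sub_pos.mpr this
      have hfact : ∏ j ∈ univ.erase i, (ν i - ν j) =
          (-1 : ℝ)^(i.val) * ((∏ j ∈ Finset.Iio i, (ν j - ν i)) *
            ∏ j ∈ Finset.Ioi i, (ν i - ν j)) := by
        rw [erase_eq_Iio_union_Ioi i, Finset.prod_union hdisj, e1]
        ring
      rw [hfact, ← mul_assoc, ← mul_pow]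
      norm_num
      exact mul_pos h2 h3
    have hApos : ∀ i : Fin (m+1), 0 ≤ (-1 : ℝ)^(i.val+1) * ∏ l, (ν i - μ l) := by
      intro i
      have hdisj : Disjoint (Finset.Iic (i.castSucc : Fin (m+1+1)))
          (Finset.Ioi (i.castSucc : Fin (m+1+1))) := by
        rw [Finset.disjoint_left]
        intro a ha hb
        rw [Finset.mem_Iic] at ha
        rw [Finset.mem_Ioi] at hb
        exact absurd (ha.trans_lt hb) (lt_irrefl _)
      have e1 : ∏ l ∈ Finset.Iic (i.castSucc : Fin (m+1+1)), (ν i - μ l) =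
          (-1 : ℝ)^(i.val+1) * ∏ l ∈ Finset.Iic (i.castSucc : Fin (m+1+1)), (μ l - ν i) := by
        rw [show i.val + 1 = #(Finset.Iic (i.castSucc : Fin (m+1+1))) by
            rw [Fin.card_Iic]; simp, ← prod_neg']
        exact Finset.prod_congr rfl fun l _ => by ring
      have h2 : (0:ℝ) ≤ ∏ l ∈ Finset.Iic (i.castSucc : Fin (m+1+1)), (μ l - ν i) := by
        refine Finset.prod_nonneg fun l hl => ?_
        rw [Finset.mem_Iic, Fin.le_def] at hl
        simp only [Fin.coe_castSucc] at hl
        have e2 : μ (⟨l.val, by omega⟩ : Fin (m+1+1)) = μ l :=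
          congrArg μ (Fin.ext rfl)
        have h4 : ν (⟨i.val, i.isLt⟩ : Fin (m+1)) ≤ ν ⟨l.val, by omega⟩ :=
          hmono l.val i.val (by omega) i.isLt hl
        have h5 := (h l.val (by omega)).1
        rw [e2] at h5
        have h6 : ν i = ν (⟨i.val, i.isLt⟩ : Fin (m+1)) := by congr 1
        rw [h6]
        linarith
      have h3 : (0:ℝ) ≤ ∏ l ∈ Finset.Ioi (i.castSucc : Fin (m+1+1)), (ν i - μ l) := by
        refine Finset.prod_nonneg fun l hl => ?_
        rw [Finset.mem_Ioi, Fin.lt_def] at hl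
        simp only [Fin.coe_castSucc] at hl
        have e2 : μ (⟨(l.val - 1) + 1, by omega⟩ : Fin (m+1+1)) = μ l := by
          congr 1
          apply Fin.ext
          simp only []
          omega
        have h4 := (h (l.val - 1) (by omega)).2
        rw [e2] at h4
        have h5 : ν (⟨l.val - 1, by omega⟩ : Fin (m+1)) ≤ ν ⟨i.val, i.isLt⟩ :=
          hmono i.val (l.val - 1) i.isLt (by omega) (by omega)
        have h6 : ν i = ν (⟨i.val, i.isLt⟩ : Fin (m+1)) := by congr 1
        rw [h6]
        linarith
      have hfact : ∏ l, (ν i - μ l) =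
          (-1 : ℝ)^(i.val+1) * ((∏ l ∈ Finset.Iic (i.castSucc : Fin (m+1+1)), (μ l - ν i)) *
            ∏ l ∈ Finset.Ioi (i.castSucc : Fin (m+1+1)), (ν i - μ l)) := by
        rw [univ_eq_Iic_union_Ioi (i.castSucc : Fin (m+1+1)), Finset.prod_union hdisj, e1]
        ring
      rw [hfact, ← mul_assoc, ← mul_pow]
      norm_num
      exact mul_nonneg h2 h3
    have heval : ∀ i : Fin (m+1), eval (ν i) sP = -∏ l, (ν i - μ l) := by
      intro i
      rw [hsPdef]
      simp only [eval_sub, eval_mul, eval_X, eval_C, eval_prod]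
      rw [Finset.prod_eq_zero (Finset.mem_univ i) (by simp)]
      ring
    refine ⟨fun i => eval (ν i) sP * (∏ j ∈ univ.erase i, (ν i - ν j))⁻¹, tt, ?_, ?_⟩
    · intro i
      show 0 ≤ eval (ν i) sP * (∏ j ∈ univ.erase i, (ν i - ν j))⁻¹
      have hB := hBpos i
      have hne1 : ((-1 : ℝ))^i.val ≠ 0 := pow_ne_zero _ (by norm_num)
      have hBne : (∏ j ∈ univ.erase i, (ν i - ν j)) ≠ 0 := by
        intro hz
        rw [hz, mul_zero] at hB
        exact lt_irrefl _ hB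
      have hE : 0 ≤ (-1 : ℝ)^i.val * eval (ν i) sP := by
        rw [heval i]
        have := hApos i
        calc (0:ℝ) ≤ (-1)^(i.val+1) * ∏ l, (ν i - μ l) := this
          _ = (-1)^i.val * -∏ l, (ν i - μ l) := by rw [pow_succ]; ring
      have key : eval (ν i) sP * (∏ j ∈ univ.erase i, (ν i - ν j))⁻¹ =
          ((-1 : ℝ)^i.val * eval (ν i) sP) *
            ((-1 : ℝ)^i.val * ∏ j ∈ univ.erase i, (ν i - ν j))⁻¹ := by
        rw [mul_inv]
        field_simp
      rw [key]
      exact mul_nonneg hE (inv_nonneg.mpr hB.le)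
    · show (∏ l, (X - C (μ l)) : ℝ[X]) = (X - C tt) * (∏ i, (X - C (ν i))) -
          ∑ i, C (eval (ν i) sP * (∏ j ∈ univ.erase i, (ν i - ν j))⁻¹) *
            ∏ j ∈ univ.erase i, (X - C (ν j))
      rw [← hSsum, hsPdef]
      ring

lemma eval_charpoly' {N : Type*} [DecidableEq N] [Fintype N] (M : Matrix N N ℂ) (z : ℂ) :
    eval z M.charpoly = (Matrix.of fun i j => (if i = j then z else 0) - M i j).det := by
  rw [Matrix.charpoly, ← Polynomial.coe_evalRingHom, RingHom.map_det]
  congr 1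
  ext i j
  by_cases hij : i = j
  · subst hij
    simp [Matrix.charmatrix_apply_eq]
  · simp [Matrix.charmatrix_apply_ne _ _ _ hij, hij]

lemma det_arrow (n : ℕ) (d b a : Fin n → ℂ) (e : ℂ) (hd : ∀ i, d i ≠ 0) :
    (Matrix.fromBlocks (Matrix.diagonal d) (Matrix.of fun i (_ : Unit) => b i)
      (Matrix.of fun (_ : Unit) i => a i) (Matrix.of fun (_ : Unit) (_ : Unit) => e)).det
    = (∏ i, d i) * e - ∑ i, a i * b i * ∏ j ∈ univ.erase i, d j := by
  have hdet : IsUnit (Matrix.diagonal d).det := by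
    rw [Matrix.det_diagonal]
    exact isUnit_iff_ne_zero.mpr (Finset.prod_ne_zero_iff.mpr fun i _ => hd i)
  have : Invertible (Matrix.diagonal d) := Matrix.invertibleOfIsUnitDet _ hdet
  have hinv : ⅟(Matrix.diagonal d) = Matrix.diagonal (fun i => (d i)⁻¹) := by
    apply invOf_eq_right_inv
    rw [Matrix.diagonal_mul_diagonal]
    convert Matrix.diagonal_one
    rename_i i
    exact mul_inv_cancel₀ (hd i)
  rw [Matrix.det_fromBlocks₁₁, hinv, Matrix.det_diagonal, Matrix.det_unique]
  have hent : (Matrix.of (fun (_ : Unit) (_ : Unit) => e) -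
      Matrix.of (fun (_ : Unit) i => a i) * (Matrix.diagonal (fun i => (d i)⁻¹)) *
        Matrix.of (fun i (_ : Unit) => b i)) default default =
      e - ∑ i, a i * (d i)⁻¹ * b i := by
    rw [Matrix.sub_apply, Matrix.mul_apply]
    congr 1
    refine Finset.sum_congr rfl fun i _ => ?_
    rw [Matrix.mul_diagonal]
    simp
  rw [hent, mul_sub, Finset.mul_sum]
  congr 1
  refine Finset.sum_congr rfl fun i _ => ?_
  rw [← Finset.mul_prod_erase univ d (Finset.mem_univ i)]
  field_simp [hd i]

lemma Hmat_charpoly (k : ℕ) (hk : 1 ≤ k) (ν : Fin (2*k-1) → ℝ) (x : Fin (2*k-1) → ℂ)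
    (xlast : ℝ) :
    (Hmat k ν x xlast).charpoly =
      (X - C (xlast : ℂ)) * ∏ i, (X - C ((ν i : ℝ) : ℂ)) -
        ∑ i, C ((starRingEnd ℂ) (x i) * x i) *
          ∏ j ∈ univ.erase i, (X - C ((ν j : ℝ) : ℂ)) := by
  have hlt : 2*k-1 < 2*k := by omega
  let e : Fin (2*k-1) ⊕ Unit ≃ Fin (2*k) :=
    { toFun := Sum.elim (fun i => ⟨i.val, by omega⟩) (fun _ => ⟨2*k-1, hlt⟩)
      invFun := fun j => if h : j.val < 2*k-1 then Sum.inl ⟨j.val, h⟩ else Sum.inr ()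
      left_inv := by
        rintro (i | u)
        · simp [i.isLt]
        · simp
      right_inv := by
        intro j
        by_cases hj : j.val < 2*k-1
        · simp [hj]
        · simp only [hj, dif_neg, not_false_iff, Sum.elim_inr]
          exact Fin.ext (by have := j.isLt; simp; omega) }
  apply Polynomial.eq_of_infinite_eval_eq
  have hinf : (Set.range (fun i : Fin (2*k-1) => ((ν i : ℝ) : ℂ)))ᶜ.Infinite :=
    (Set.finite_range _).infinite_compl
  refine hinf.mono ?_
  intro z hz
  simp only [Set.mem_compl_iff, Set.mem_range, not_exists] at hz
  have hzν : ∀ i : Fin (2*k-1), z - ((ν i : ℝ) : ℂ) ≠ 0 := fun i h => hz i (by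
    have := sub_eq_zero.mp h
    exact this.symm)
  simp only [Set.mem_setOf_eq]
  rw [eval_charpoly']
  have hN : (Matrix.of fun i j => (if i = j then z else 0) - Hmat k ν x xlast i j) =
      Matrix.reindex e e
        (Matrix.fromBlocks (Matrix.diagonal (fun i => z - ((ν i : ℝ) : ℂ)))
          (Matrix.of fun i (_ : Unit) => -((starRingEnd ℂ) (x i)))
          (Matrix.of fun (_ : Unit) i => -(x i))
          (Matrix.of fun (_ : Unit) (_ : Unit) => z - (xlast : ℂ))) := by
    ext i j
    rw [Matrix.reindex_apply, Matrix.submatrix_apply]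
    have hsymm : ∀ (jj : Fin (2*k)), e.symm jj =
        if h : jj.val < 2*k-1 then Sum.inl ⟨jj.val, h⟩ else Sum.inr () := fun _ => rfl
    rw [hsymm i, hsymm j]
    simp only [Matrix.of_apply, Hmat, Matrix.of_apply]
    by_cases hi : i.val < 2*k-1 <;> by_cases hj : j.val < 2*k-1 <;>
      simp only [hi, hj, dif_pos, dif_neg, not_false_iff]
    · by_cases hij : i = j
      · subst hij
        rw [Matrix.fromBlocks_apply₁₁, Matrix.diagonal_apply_eq]
        simp
      · have hij' : (⟨i.val, hi⟩ : Fin (2*k-1)) ≠ ⟨j.val, hj⟩ := by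
          intro hh
          exact hij (Fin.ext (Fin.mk_eq_mk.mp hh))
        rw [if_neg hij, Matrix.fromBlocks_apply₁₁, Matrix.diagonal_apply_ne _ hij', if_neg hij]
        ring
    · have hij : i ≠ j := by
        intro hh
        subst hh
        exact hj hi
      rw [if_neg hij, Matrix.fromBlocks_apply₁₂]
      simp
    · have hij : i ≠ j := by
        intro hh
        subst hh
        exact hi hj
      rw [if_neg hij, Matrix.fromBlocks_apply₂₁]
      simp
    · have hij : i = j := by
        apply Fin.ext
        have h1 := i.isLt
        have h2 := j.isLt
        omega
      rw [if_pos hij, Matrix.fromBlocks_apply₂₂]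
      rfl
  rw [hN, Matrix.det_reindex_self, det_arrow _ _ _ _ _ hzν]
  simp only [eval_sub, eval_mul, eval_prod, eval_finset_sum, eval_X, eval_C]
  congr 1
  · ring
  · exact Finset.sum_congr rfl fun i _ => by ring

/-- Given interlacing `μ₁ ≥ ν₁ ≥ μ₂ ≥ ν₂ ≥ … ≥ μ_{2k-1} ≥ ν_{2k-1} ≥ μ_{2k}`, there
are `x₁, …, x_{2k-1} ∈ ℂ` and `x_{2k} ∈ ℝ` such that the Hermitian matrix `H(ν, x)`
has eigenvalues `μ₁, …, μ_{2k}` (with multiplicity). -/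
theorem statement9 (k : ℕ) (hk : 1 ≤ k) (μ : Fin (2*k) → ℝ) (ν : Fin (2*k-1) → ℝ)
    (h : ∀ i : ℕ, ∀ hi : i < 2*k-1,
      μ ⟨i, by omega⟩ ≥ ν ⟨i, hi⟩ ∧ ν ⟨i, hi⟩ ≥ μ ⟨i + 1, by omega⟩) :
    ∃ (x : Fin (2*k-1) → ℂ) (xlast : ℝ),
      (Hmat k ν x xlast).charpoly = ∏ l : Fin (2*k), (X - C (μ l : ℂ)) := by
  have h2 : 2*k-1+1 = 2*k := by omega
  obtain ⟨c, t, hc, hkey⟩ := key (2*k-1) (by omega)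
    (fun l => μ (Fin.cast h2 l)) ν
    (fun i hi => ⟨(h i hi).1, (h i hi).2⟩)
  refine ⟨fun i => ((Real.sqrt (c i) : ℝ) : ℂ), t, ?_⟩
  rw [Hmat_charpoly k hk ν _ t]
  have hxc : ∀ i : Fin (2*k-1),
      (starRingEnd ℂ) ((Real.sqrt (c i) : ℝ) : ℂ) * ((Real.sqrt (c i) : ℝ) : ℂ) =
        ((c i : ℝ) : ℂ) := by
    intro i
    rw [Complex.conj_ofReal, ← Complex.ofReal_mul, Real.mul_self_sqrt (hc i)]
  have hmap := congrArg (Polynomial.map (algebraMap ℝ ℂ)) hkey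
  simp only [Polynomial.map_prod, Polynomial.map_sub, Polynomial.map_mul, Polynomial.map_sum,
    Polynomial.map_X, Polynomial.map_C, Complex.coe_algebraMap] at hmap
  have hprod : (∏ l : Fin (2*k-1+1), (X - C ((μ (Fin.cast h2 l) : ℝ) : ℂ)) : ℂ[X]) =
      ∏ l : Fin (2*k), (X - C ((μ l : ℝ) : ℂ)) :=
    Fintype.prod_equiv (finCongr h2) _ _ (fun l => rfl)
  simp only [hxc]
  rw [← hprod, hmap]
end

section
/- Let k ≥ 1, let ν_1,…,ν_{2k−1} and μ_1,…,μ_{2k} be real numbers, and let x_1,…,x_{2k−1} ∈ ℂ, x_{2k} ∈ ℝ be such that the Hermitian matrix H(ν,x) has characteristic polynomial ∏_{l=1}^{2k}(X − μ_l). Suppose j ∈ {1,…,2k} and m ∈ {1,…,2k−1} are such that μ_j = ν_m and ν_l ≠ μ_j for every l ≠ m. Then x_m = 0. -/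
/-!
`H(ν, x)` is an arrowhead matrix, and `ν_m` is one of its eigenvalues, so `ν_m - H(ν, x)` is a
singular arrowhead matrix whose shaft diagonal `ν_m - ν_l` vanishes exactly at `l = m`. If
`x_m ≠ 0`, the rows of a kernel vector `v` force successively `v_{2k} = 0` (row `m`),
`v_l = 0` for `l ≠ m` (the other shaft rows) and `v_m = 0` (the last row), so `v = 0`.
-/

open Matrix Polynomial

namespace Matrix

variable {ι K : Type*} [DecidableEq ι]

def arrowhead [Zero K] (d c r : ι → K) (t : K) : Matrix (Option ι) (Option ι) K :=
  of fun
    | some i, some j => diagonal d i j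
    | some i, none => c i
    | none, some j => r j
    | none, none => t

variable [Fintype ι] {d c r : ι → K} {t : K}

theorem scalar_sub_arrowhead [Ring K] (a : K) :
    scalar (Option ι) a - arrowhead d c r t = arrowhead (fun i => a - d i) (-c) (-r) (a - t) := by
  ext (_ | i) (_ | j) <;> simp [arrowhead, diagonal_apply, ite_sub_ite]

theorem arrowhead_mulVec_some [NonUnitalNonAssocSemiring K] (v : Option ι → K) (i : ι) :
    (arrowhead d c r t *ᵥ v) (some i) = c i * v none + d i * v (some i) := by
  simp [arrowhead, mulVec, dotProduct, Fintype.sum_option, diagonal_apply]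

theorem arrowhead_mulVec_none [NonUnitalNonAssocSemiring K] (v : Option ι → K) :
    (arrowhead d c r t *ᵥ v) none = t * v none + ∑ j, r j * v (some j) := by
  simp [arrowhead, mulVec, dotProduct, Fintype.sum_option]

theorem eq_zero_or_eq_zero_of_det_arrowhead_eq_zero [Field K] {m : ι}
    (hdet : (arrowhead d c r t).det = 0) (hm : d m = 0) (hd : ∀ i ≠ m, d i ≠ 0) :
    c m = 0 ∨ r m = 0 := by
  by_contra! ⟨hc, hr⟩
  obtain ⟨v, hv, hAv⟩ := exists_mulVec_eq_zero_iff.mpr hdet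
  have row i : c i * v none + d i * v (some i) = 0 :=
    (arrowhead_mulVec_some v i).symm.trans (congrFun hAv _)
  have tip : t * v none + ∑ j, r j * v (some j) = 0 :=
    (arrowhead_mulVec_none v).symm.trans (congrFun hAv _)
  have h_none : v none = 0 := by simpa [hm, hc] using row m
  have h_some i (hi : i ≠ m) : v (some i) = 0 := by simpa [h_none, hd i hi] using row i
  have h_m : v (some m) = 0 := by
    rw [Fintype.sum_eq_single m fun i hi => by rw [h_some i hi, mul_zero]] at tip
    simpa [h_none, hr] using tip
  refine hv (funext ?_)
  rintro (_ | i)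
  · exact h_none
  · obtain rfl | hi := eq_or_ne i m
    exacts [h_m, h_some i hi]

end Matrix

theorem reindex_Hmat {k : ℕ} (h : 2 * k = 2 * k - 1 + 1) (ν : Fin (2*k-1) → ℝ)
    (x : Fin (2*k-1) → ℂ) (xlast : ℝ) :
    reindex ((finCongr h).trans finSuccEquivLast) ((finCongr h).trans finSuccEquivLast)
      (Hmat k ν x xlast) =
      arrowhead (fun i => (ν i : ℂ)) (fun i => starRingEnd ℂ (x i)) x xlast := by
  ext (_ | i) (_ | j) <;>
    simp [Hmat, arrowhead, finSuccEquivLast_symm_some, diagonal_apply, Fin.ext_iff]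

theorem statement11_general (k : ℕ) (μ : Fin (2*k) → ℝ) (ν : Fin (2*k-1) → ℝ)
    (x : Fin (2*k-1) → ℂ) (xlast : ℝ)
    (hchar : (Hmat k ν x xlast).charpoly = ∏ l : Fin (2*k), (X - C (μ l : ℂ)))
    (j : Fin (2*k)) (m : Fin (2*k-1)) (hjm : μ j = ν m)
    (huniq : ∀ l : Fin (2*k-1), l ≠ m → ν l ≠ μ j) :
    x m = 0 := by
  have hk : 2 * k = 2 * k - 1 + 1 := by have := m.isLt; omega
  have hdet : (arrowhead (fun i => (ν m : ℂ) - ν i) (-fun i => starRingEnd ℂ (x i)) (-x)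
      ((ν m : ℂ) - xlast)).det = 0 := by
    rw [← scalar_sub_arrowhead, ← eval_charpoly, ← reindex_Hmat hk, charpoly_reindex, hchar,
      eval_prod]
    exact Finset.prod_eq_zero (Finset.mem_univ j) (by simp [hjm])
  have hν : ∀ i ≠ m, (ν m : ℂ) - ν i ≠ 0 := fun i hi =>
    sub_ne_zero.mpr fun h => huniq i hi (by rw [hjm]; exact_mod_cast h.symm)
  obtain h | h := eq_zero_or_eq_zero_of_det_arrowhead_eq_zero hdet (sub_self _) hν <;>
    simpa using h

/-- If `H(ν, x)` has eigenvalues `μ₁, …, μ_{2k}` and `m` is the unique index with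
`ν m = μ j`, then `x m = 0`. -/
theorem statement11 (k : ℕ) (hk : 1 ≤ k) (μ : Fin (2*k) → ℝ) (ν : Fin (2*k-1) → ℝ)
    (x : Fin (2*k-1) → ℂ) (xlast : ℝ)
    (hchar : (Hmat k ν x xlast).charpoly = ∏ l : Fin (2*k), (X - C (μ l : ℂ)))
    (j : Fin (2*k)) (m : Fin (2*k-1)) (hjm : μ j = ν m)
    (huniq : ∀ l : Fin (2*k-1), l ≠ m → ν l ≠ μ j) :
    x m = 0 :=
  statement11_general k μ ν x xlast hchar j m hjm huniq
end

section
/- Let k ≥ 1 and let a_1,…,a_k be nonzero real numbers. Set S = diag(L(a_1),…,L(a_{k−1}),L(a_k)) and S̃ = diag(L(a_1),…,L(a_{k−1}),L(−a_k)), both 2k×2k real skew-symmetric matrices. Then the diagonal orthogonal matrix R = diag(1,…,1,−1) (which has determinant −1) satisfies R S R⁻¹ = S̃, so S and S̃ are conjugate by an orthogonal matrix; however, there exists no B ∈ SO(2k) with B S B⁻¹ = S̃. -/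
/-!
If some `B ∈ SO(2k)` conjugated `S` to `S̃ = R S R⁻¹`, then `C = R⁻¹ B` would commute with
`S` and have determinant `-1`. But `S² = -D` with `D` diagonal and positive, so `J = S D^{-1/2}`
is a complex structure (`J² = -1`) commuting with `C`. A real matrix that is complex linear for a
complex structure has nonnegative determinant: after complexifying, the spectral projections
`P, Q = (1 ∓ iJ)/2` are complex conjugate to each other, and `C = (CP + Q)(CQ + P)` is the product
of a matrix and its complex conjugate, so `det C = |det (CP + Q)|²`.
-/

open Matrix Polynomial

theorem mul_add_mul_add_eq_self_of_add_eq_one {R : Type*} [Ring R] {c p q : R} (hpq : p + q = 1)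
    (hpq0 : p * q = 0) (hqp0 : q * p = 0) (hcp : Commute c p) :
    (c * p + q) * (c * q + p) = c := by
  have hq : q = 1 - p := eq_sub_of_add_eq' hpq
  have hcq : Commute c q := hq ▸ (Commute.one_right c).sub_right hcp
  have hpp : p * p = p := by simpa [mul_add, hpq0] using congrArg (p * ·) hpq
  have hqq : q * q = q := by simpa [mul_add, hqp0] using congrArg (q * ·) hpq
  calc (c * p + q) * (c * q + p) = c * (p * c) * q + c * (p * p) + q * c * q + q * p := by
        noncomm_ring
    _ = c * c * (p * q) + c * (p * p) + c * (q * q) + q * p := by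
        rw [← hcp.eq, ← hcq.eq]; noncomm_ring
    _ = c := by rw [hpq0, hqp0, hpp, hqq, mul_zero, zero_add, add_zero, ← mul_add, hpq, mul_one]

namespace Matrix

variable {n α : Type*} [Fintype n] [DecidableEq n]

theorem commute_diagonal_iff [CommRing α] [NoZeroDivisors α] {M : Matrix n n α} {d : n → α} :
    Commute M (diagonal d) ↔ ∀ i j, M i j ≠ 0 → d i = d j := by
  simp only [commute_iff_eq, ← ext_iff, mul_diagonal, diagonal_mul]
  refine forall₂_congr fun i j => ?_
  rw [mul_comm, ← sub_eq_zero, ← sub_mul, mul_eq_zero, sub_eq_zero, or_comm,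
    or_iff_not_imp_left, eq_comm (a := d j)]

theorem commute_diagonal_comp [CommRing α] [NoZeroDivisors α] {M : Matrix n n α} {d : n → α}
    (h : Commute M (diagonal d)) (f : α → α) : Commute M (diagonal (f ∘ d)) :=
  commute_diagonal_iff.2 fun i j hij => congrArg f (commute_diagonal_iff.1 h i j hij)

theorem commute_inv_mul_of_mul_mul_inv_eq [CommRing α] {A B S : Matrix n n α}
    (hA : IsUnit A.det) (hB : IsUnit B.det) (h : B * S * B⁻¹ = A * S * A⁻¹) :
    Commute (A⁻¹ * B) S := by
  calc A⁻¹ * B * S = A⁻¹ * (B * S * B⁻¹) * B := by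
        simp only [Matrix.mul_assoc, nonsing_inv_mul _ hB, Matrix.mul_one]
    _ = A⁻¹ * (A * S * A⁻¹) * B := by rw [h]
    _ = S * (A⁻¹ * B) := by
        simp only [← Matrix.mul_assoc, nonsing_inv_mul _ hA, Matrix.one_mul]

open ComplexConjugate in
theorem det_nonneg_of_commute_of_mul_self_eq_neg_one {C J : Matrix n n ℝ} (hJ : J * J = -1)
    (hCJ : Commute C J) : 0 ≤ C.det := by
  set φ := Complex.ofRealHom.mapMatrix (m := n)
  set K : Matrix n n ℂ := Complex.I • φ J
  have hK : K * K = 1 := by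
    rw [smul_mul_smul_comm, ← map_mul, hJ, map_neg, map_one, Complex.I_mul_I, neg_one_smul,
      neg_neg]
  have hconjC : (conj).mapMatrix (φ C) = φ C := by ext; simp [φ]
  set P : Matrix n n ℂ := (2 : ℂ)⁻¹ • (1 - K)
  set Q : Matrix n n ℂ := (2 : ℂ)⁻¹ • (1 + K)
  have hPQ : P + Q = 1 := by
    rw [← smul_add, sub_add_add_cancel, ← two_smul ℂ, smul_smul,
      inv_mul_cancel₀ two_ne_zero, one_smul]
  have hPQ0 : P * Q = 0 := by
    rw [smul_mul_smul_comm, show (1 - K) * (1 + K) = 1 - K * K by noncomm_ring, hK, sub_self,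
      smul_zero]
  have hQP0 : Q * P = 0 := by
    rw [smul_mul_smul_comm, show (1 + K) * (1 - K) = 1 - K * K by noncomm_ring, hK, sub_self,
      smul_zero]
  have hCP : Commute (φ C) P :=
    (((Commute.one_right _).sub_right ((hCJ.map φ).smul_right _)).smul_right _)
  have hconjP : (conj).mapMatrix P = Q := by
    ext i j; simp [P, Q, K, φ, one_apply, mul_sub, apply_ite, map_ofNat]
  have hconjQ : (conj).mapMatrix Q = P := by
    rw [← hconjP]; ext; simp
  set z := (φ C * P + Q).det
  have hdet : (C.det : ℂ) = z * conj z := by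
    rw [show (C.det : ℂ) = (φ C).det from RingHom.map_det Complex.ofRealHom C,
      ← mul_add_mul_add_eq_self_of_add_eq_one hPQ hPQ0 hQP0 hCP, det_mul, RingHom.map_det,
      map_add, map_mul, hconjC, hconjP, hconjQ]
  rw [Complex.mul_conj, Complex.ofReal_inj] at hdet
  exact hdet ▸ Complex.normSq_nonneg z

theorem det_nonneg_of_commute_of_mul_self_eq_neg_diagonal {C S : Matrix n n ℝ} {d : n → ℝ}
    (hd : ∀ i, 0 < d i) (hS : S * S = -diagonal d) (hCS : Commute C S) : 0 ≤ C.det := by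
  have hSd : Commute S (diagonal d) :=
    Commute.neg_right_iff.1 (hS ▸ (Commute.refl S).mul_right (Commute.refl S))
  have hCd : Commute C (diagonal d) := Commute.neg_right_iff.1 (hS ▸ hCS.mul_right hCS)
  set f : ℝ → ℝ := fun x => (√x)⁻¹
  set E := diagonal (f ∘ d)
  have hJ : S * E * (S * E) = -1 := by
    rw [(commute_diagonal_comp hSd f).symm.mul_mul_mul_comm S E, hS, neg_mul,
      diagonal_mul_diagonal, diagonal_mul_diagonal, ← diagonal_one]
    congr 2 with i
    have hne : √(d i) ≠ 0 := (Real.sqrt_pos.2 (hd i)).ne'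
    simp only [Function.comp_apply, f]
    field_simp
    exact (Real.sq_sqrt (hd i).le).symm
  exact det_nonneg_of_commute_of_mul_self_eq_neg_one hJ
    (hCS.mul_right (commute_diagonal_comp hCd f))

end Matrix

def skewBlock (x : ℝ) : Matrix (Fin 2) (Fin 2) ℝ := !![0, -x; x, 0]

def pairEquiv (k : ℕ) : Fin 2 × Fin k ≃ Fin (2 * k) :=
  (Equiv.prodComm _ _).trans (finProdFinEquiv.trans (finCongr (Nat.mul_comm k 2)))

@[simp] lemma pairEquiv_symm_apply_fst {k : ℕ} (i : Fin (2 * k)) :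
    ((pairEquiv k).symm i).1 = ⟨i.val % 2, Nat.mod_lt _ two_pos⟩ := by
  apply Fin.ext; simp [pairEquiv, finProdFinEquiv]

@[simp] lemma pairEquiv_symm_apply_snd {k : ℕ} (i : Fin (2 * k)) :
    ((pairEquiv k).symm i).2 = ⟨i.val / 2, by omega⟩ := by
  apply Fin.ext; simp [pairEquiv, finProdFinEquiv]

lemma diagL_eq_submatrix_blockDiagonal (k : ℕ) (c : Fin k → ℝ) :
    diagL (2 * k) k c =
      (blockDiagonal fun b => skewBlock (c b)).submatrix (pairEquiv k).symm (pairEquiv k).symm := by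
  ext i j
  have hi := i.isLt
  simp only [diagL, of_apply, submatrix_apply, blockDiagonal_apply, pairEquiv_symm_apply_fst,
    pairEquiv_symm_apply_snd, Fin.mk.injEq, skewBlock]
  by_cases h : i.val / 2 = j.val / 2
  · rw [dif_pos ⟨h, by omega⟩, if_pos h]
    rcases Nat.mod_two_eq_zero_or_one i.val with hi2 | hi2 <;>
      rcases Nat.mod_two_eq_zero_or_one j.val with hj2 | hj2 <;>
      simp [hi2, hj2, h]
  · rw [dif_neg (fun h' => h h'.1), if_neg h]

lemma skewBlock_mul_self (x : ℝ) : skewBlock x * skewBlock x = diagonal fun _ => -x ^ 2 := by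
  ext i j; fin_cases i <;> fin_cases j <;> simp [skewBlock, sq]

lemma diagL_mul_self (k : ℕ) (c : Fin k → ℝ) :
    diagL (2 * k) k c * diagL (2 * k) k c = -diagonal fun i => c ((pairEquiv k).symm i).2 ^ 2 := by
  rw [diagL_eq_submatrix_blockDiagonal, submatrix_mul_equiv, ← blockDiagonal_mul]
  simp only [skewBlock_mul_self, blockDiagonal_diagonal, submatrix_diagonal_equiv, diagonal_neg]
  rfl

def reflectLast (m : ℕ) : Matrix (Fin m) (Fin m) ℝ :=
  diagonal fun i => if i.val = m - 1 then -1 else 1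

lemma reflectLast_mul_self (m : ℕ) : reflectLast m * reflectLast m = 1 := by
  rw [reflectLast, diagonal_mul_diagonal, ← diagonal_one]
  congr 1 with i
  split_ifs <;> norm_num

lemma det_reflectLast {m : ℕ} (hm : 0 < m) : (reflectLast m).det = -1 := by
  rw [reflectLast, det_diagonal, Finset.prod_eq_single ⟨m - 1, by omega⟩]
  · simp
  · intro i _ hi
    rw [if_neg fun h => hi (Fin.ext h)]
  · simp

lemma reflectLast_mul_diagL_mul_reflectLast (k : ℕ) (c : Fin k → ℝ) :
    reflectLast (2 * k) * diagL (2 * k) k c * reflectLast (2 * k) =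
      diagL (2 * k) k fun i => if i.val = k - 1 then -c i else c i := by
  ext i j
  have hi := i.isLt
  have hj := j.isLt
  rw [reflectLast, mul_diagonal, diagonal_mul]
  simp only [diagL, of_apply]
  by_cases h : i.val / 2 = j.val / 2 ∧ i.val / 2 < k
  · rw [dif_pos h, dif_pos h]
    split_ifs <;> first | (exfalso; omega) | ring
  · rw [dif_neg h, dif_neg h]
    ring

/-- For nonzero `a₁, …, aₖ`, the matrices `S = diag (L a₁, …, L aₖ)` and
`S̃ = diag (L a₁, …, L a_{k-1}, L (-aₖ))` are conjugate by the orthogonal matrix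
`R = diag (1, …, 1, -1)` of determinant `-1`, but they are not SO(2k)-conjugate. -/
theorem statement18 (k : ℕ) (hk : 1 ≤ k) (a : Fin k → ℝ) (ha : ∀ i, a i ≠ 0) :
    letI S : Matrix (Fin (2*k)) (Fin (2*k)) ℝ := diagL (2*k) k a
    letI S' : Matrix (Fin (2*k)) (Fin (2*k)) ℝ :=
      diagL (2*k) k (fun i => if i.val = k - 1 then -a i else a i)
    letI R : Matrix (Fin (2*k)) (Fin (2*k)) ℝ :=
      Matrix.diagonal (fun i => if i.val = 2*k - 1 then -1 else 1)
    Rᵀ * R = 1 ∧ R.det = -1 ∧ R * S * R⁻¹ = S' ∧ ¬ SOConj S S' := by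
  set R : Matrix (Fin (2 * k)) (Fin (2 * k)) ℝ := reflectLast (2 * k)
  set S := diagL (2 * k) k a
  set S' := diagL (2 * k) k fun i => if i.val = k - 1 then -a i else a i
  have hR : R * R = 1 := reflectLast_mul_self _
  have hRT : Rᵀ = R := diagonal_transpose _
  have hRinv : R⁻¹ = R := inv_eq_left_inv hR
  have hdetR : R.det = -1 := det_reflectLast (by omega)
  have hRSR : R * S * R⁻¹ = S' := by rw [hRinv]; exact reflectLast_mul_diagL_mul_reflectLast k a
  refine ⟨hRT ▸ hR, hdetR, hRSR, ?_⟩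
  rintro ⟨B, -, hdetB, hB⟩
  have hC : Commute (R⁻¹ * B) S :=
    commute_inv_mul_of_mul_mul_inv_eq (by simp [hdetR]) (by simp [hdetB]) (hB.trans hRSR.symm)
  have hdetC := det_nonneg_of_commute_of_mul_self_eq_neg_diagonal
    (fun _ => sq_pos_of_ne_zero (ha _)) (diagL_mul_self k a) hC
  rw [det_mul, hRinv, hdetR, hdetB] at hdetC
  norm_num at hdetC
end
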